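/- arXiv:2108.13021 — 7 statements merged into one kernel-verified Lean document; each statement's English description precedes it below -/
import Mathlib

section
/- For all complex numbers z₁, z₂, we have |Im((z₂ ln|z₂|² − z₁ ln|z₁|²)(conj(z₂) − conj(z₁)))| ≤ 4|z₂ − z₁|², where by convention z ln|z|² = 0 when z = 0. -/
/-!
Since `Real.log 0 = 0`, `F(z) = z g(z)` with the real factor `g(z) = ln|z|²` everywhere. For real
`g₁, g₂` the diagonal terms `gᵢ |zᵢ|²` are real, so the imaginary part in question collapses to
`(g₁ - g₂) Im(z₂ z̄₁)`. Now `Im(z₂ z̄₁) = Im((z₂ - z₁) z̄₁) = -Im((z₁ - z₂) z̄₂)`, so its modulus is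
at most `|z₂ - z₁| min(|z₁|, |z₂|)`, while for `0 < a ≤ b` we have `ln b - ln a ≤ b / a - 1 = (b - a) / a`;
with `g = 2 ln|z|` this gives the bound `2 |z₂ - z₁|²`.
-/

/-- The nonlinearity `F(z) = z ln|z|²`, extended by `0` at `z = 0`. -/
noncomputable def logNL (z : ℂ) : ℂ :=
  if z = 0 then 0 else z * Real.log (‖z‖ ^ 2)

open Complex ComplexConjugate

lemma logNL_eq_mul_log (z : ℂ) : logNL z = z * (Real.log (‖z‖ ^ 2) : ℝ) := by
  unfold logNL
  split_ifs with hz <;> simp [hz]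

lemma im_sub_mul_conj_sub (z₁ z₂ : ℂ) (g₁ g₂ : ℝ) :
    ((z₂ * g₂ - z₁ * g₁) * (conj z₂ - conj z₁)).im = (g₁ - g₂) * (z₂ * conj z₁).im := by
  simp only [mul_im, mul_re, sub_im, sub_re, conj_re, conj_im, ofReal_re, ofReal_im]
  ring

lemma abs_im_mul_conj_le_norm_sub_mul_norm (z₁ z₂ : ℂ) :
    |(z₂ * conj z₁).im| ≤ ‖z₂ - z₁‖ * ‖z₁‖ := by
  have h : (z₂ * conj z₁).im = ((z₂ - z₁) * conj z₁).im := by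
    simp only [mul_im, sub_re, sub_im, conj_re, conj_im]
    ring
  rw [h, ← norm_conj z₁, ← norm_mul]
  exact abs_im_le_norm _

lemma abs_im_mul_conj_le_norm_sub_mul_min (z₁ z₂ : ℂ) :
    |(z₂ * conj z₁).im| ≤ ‖z₂ - z₁‖ * min ‖z₁‖ ‖z₂‖ := by
  have h : |(z₂ * conj z₁).im| = |(z₁ * conj z₂).im| := by
    rw [← abs_neg, ← conj_im, map_mul, conj_conj, mul_comm]
  rw [mul_min_of_nonneg _ _ (norm_nonneg _)]
  refine le_min (abs_im_mul_conj_le_norm_sub_mul_norm z₁ z₂) ?_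
  rw [h, norm_sub_rev]
  exact abs_im_mul_conj_le_norm_sub_mul_norm z₂ z₁

lemma Real.log_sub_log_mul_le_sq {a b t d : ℝ} (ha : 0 < a) (hab : a ≤ b) (hbd : b - a ≤ d)
    (ht : |t| ≤ d * a) : (Real.log b - Real.log a) * |t| ≤ d ^ 2 := by
  have hd : 0 ≤ d := by linarith
  have hlog : Real.log b - Real.log a ≤ (b - a) / a := by
    rw [← Real.log_div (ha.trans_le hab).ne' ha.ne', sub_div, div_self ha.ne']
    exact Real.log_le_sub_one_of_pos (div_pos (ha.trans_le hab) ha)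
  calc (Real.log b - Real.log a) * |t| ≤ (b - a) / a * (d * a) :=
        mul_le_mul hlog ht (abs_nonneg t) (div_nonneg (by linarith) ha.le)
    _ = (b - a) * d := by field_simp
    _ ≤ d * d := mul_le_mul_of_nonneg_right hbd hd
    _ = d ^ 2 := (sq d).symm

lemma Real.abs_log_sub_log_mul_le_sq {a b t d : ℝ} (ha : 0 ≤ a) (hb : 0 ≤ b) (hbd : |b - a| ≤ d)
    (ht : |t| ≤ d * min a b) : |Real.log b - Real.log a| * |t| ≤ d ^ 2 := by
  wlog hab : a ≤ b generalizing a b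
  · rw [abs_sub_comm] at hbd ⊢
    exact this hb ha hbd (min_comm a b ▸ ht) (le_of_not_ge hab)
  rw [min_eq_left hab] at ht
  rcases ha.eq_or_lt with rfl | ha
  · rw [show t = 0 by simpa using ht, abs_zero, mul_zero]
    positivity
  rw [abs_of_nonneg (sub_nonneg.2 (Real.log_le_log ha hab))]
  exact Real.log_sub_log_mul_le_sq ha hab ((le_abs_self _).trans hbd) ht

/-- For all complex numbers `z₁, z₂`,
`|Im((z₂ ln|z₂|² − z₁ ln|z₁|²)(conj z₂ − conj z₁))| ≤ 4|z₂ − z₁|²`. -/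
theorem logNL_imaginary_estimate (z₁ z₂ : ℂ) :
    |((logNL z₂ - logNL z₁) * (starRingEnd ℂ z₂ - starRingEnd ℂ z₁)).im| ≤
      4 * ‖z₂ - z₁‖ ^ 2 := by
  have hlog : |Real.log ‖z₂‖ - Real.log ‖z₁‖| * |(z₂ * conj z₁).im| ≤ ‖z₂ - z₁‖ ^ 2 :=
    Real.abs_log_sub_log_mul_le_sq (norm_nonneg _) (norm_nonneg _)
      (abs_norm_sub_norm_le z₂ z₁) (abs_im_mul_conj_le_norm_sub_mul_min z₁ z₂)
  rw [logNL_eq_mul_log, logNL_eq_mul_log, im_sub_mul_conj_sub, abs_mul, Real.log_pow,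
    Real.log_pow, ← mul_sub, abs_mul, abs_sub_comm, Nat.cast_ofNat, abs_two, mul_assoc]
  nlinarith [sq_nonneg ‖z₂ - z₁‖]
end

section
/- Let d ≥ 1, 0 < α ≤ 1, and 0 < η < 4α/(d + 2α). There exists a constant C (depending only on d, α, η) such that for every measurable u : ℝ^d → ℂ with u ∈ L²(ℝ^d) and x ↦ |x|^α u(x) ∈ L²(ℝ^d), one has ∫_{ℝ^d} |u(x)|^{2−η} dx ≤ C · ‖u‖_{L²}^{2−η−dη/(2α)} · ‖|x|^α u‖_{L²}^{dη/(2α)}. -/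
/-!
Split `ℝ^d` at a radius `r`. On the ball `B_r`, Hölder's inequality with exponents `2/(2-η)` and
`2/η` gives `‖u‖₂^(2-η) |B_r|^(η/2)`. Outside it, writing `|u| = |x|^α |u| · |x|^(-α)`, the same
Hölder inequality gives `‖|x|^α u‖₂^(2-η) (∫_{|x|>r} |x|^(-s))^(η/2)` with `s = 2α(2-η)/η`, and
`s > d` is exactly the condition `η < 4α/(d+2α)`, so the tail integral is `c r^(d-s)`. The radius
`r = (‖|x|^α u‖₂ / ‖u‖₂)^(1/α)` makes both terms equal to a constant times the right-hand side.
-/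

open MeasureTheory Metric Set Module
open scoped ENNReal

section LIntegral
variable {X : Type*} [MeasurableSpace X] {μ : Measure X}

lemma lintegral_rpow_le_of_weight {p : ℝ} (hp0 : 0 < p) (hp2 : p < 2) {f ρ : X → ℝ≥0∞}
    (hf : AEMeasurable f μ) (hρ : AEMeasurable ρ μ) (hρ0 : ∀ᵐ x ∂μ, ρ x ≠ 0)
    (hρtop : ∀ᵐ x ∂μ, ρ x ≠ ∞) :
    ∫⁻ x, f x ^ p ∂μ ≤
      (∫⁻ x, (ρ x * f x) ^ (2 : ℝ) ∂μ) ^ (p / 2) *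
        (∫⁻ x, ρ x ^ (-(2 * p / (2 - p))) ∂μ) ^ (1 - p / 2) := by
  have hpq : Real.HolderConjugate (2 / p) (2 / (2 - p)) := by
    rw [Real.holderConjugate_iff]
    refine ⟨by rw [lt_div_iff₀ hp0]; linarith, ?_⟩
    field_simp
    ring
  have hsplit : (fun x => f x ^ p) =ᵐ[μ] fun x => (ρ x * f x) ^ p * ρ x ^ (-p) := by
    filter_upwards [hρ0, hρtop] with x h0 htop
    rw [ENNReal.mul_rpow_of_nonneg _ _ hp0.le, mul_comm, ← mul_assoc,
      ← ENNReal.rpow_add _ _ h0 htop, neg_add_cancel, ENNReal.rpow_zero, one_mul]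
  calc ∫⁻ x, f x ^ p ∂μ = ∫⁻ x, (ρ x * f x) ^ p * ρ x ^ (-p) ∂μ := lintegral_congr_ae hsplit
    _ ≤ (∫⁻ x, ((ρ x * f x) ^ p) ^ (2 / p) ∂μ) ^ (1 / (2 / p)) *
          (∫⁻ x, (ρ x ^ (-p)) ^ (2 / (2 - p)) ∂μ) ^ (1 / (2 / (2 - p))) :=
        ENNReal.lintegral_mul_le_Lp_mul_Lq μ hpq ((hρ.mul hf).pow_const _) (hρ.pow_const _)
    _ = _ := by
        simp only [← ENNReal.rpow_mul, one_div_div]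
        rw [show p * (2 / p) = 2 by field_simp,
          show -p * (2 / (2 - p)) = -(2 * p / (2 - p)) by ring,
          show (2 - p) / 2 = 1 - p / 2 by ring]

lemma eLpNorm_two_rpow_eq_lintegral {F : Type*} [NormedAddCommGroup F] (g : X → F) (p : ℝ) :
    eLpNorm g 2 μ ^ p = (∫⁻ x, ‖g x‖ₑ ^ (2 : ℝ) ∂μ) ^ (p / 2) := by
  rw [eLpNorm_eq_lintegral_rpow_enorm_toReal two_ne_zero ENNReal.ofNat_ne_top, ← ENNReal.rpow_mul]
  norm_num [div_eq_inv_mul]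

lemma integral_norm_rpow_eq_toReal_lintegral {F : Type*} [NormedAddCommGroup F] {p : ℝ}
    (hp : 0 ≤ p) {u : X → F} (hu : AEStronglyMeasurable u μ) :
    ∫ x, ‖u x‖ ^ p ∂μ = (∫⁻ x, ‖u x‖ₑ ^ p ∂μ).toReal := by
  rw [integral_eq_lintegral_of_nonneg_ae (.of_forall fun x => by positivity)
    (hu.norm.aemeasurable.pow_const p).aestronglyMeasurable]
  simp only [← ofReal_norm, ENNReal.ofReal_rpow_of_nonneg (norm_nonneg _) hp]

end LIntegral

section Weight
variable {E F : Type*} [NormedAddCommGroup E] [MeasurableSpace E] {μ : Measure E}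
  [NormedAddCommGroup F]

lemma lintegral_enorm_rpow_le_closedBall_add_compl [OpensMeasurableSpace E] {p α r : ℝ}
    (hp0 : 0 < p) (hp2 : p < 2) (hα : 0 < α) (hr : 0 < r) {u : E → F}
    (hu : AEStronglyMeasurable u μ) :
    ∫⁻ x, ‖u x‖ₑ ^ p ∂μ ≤
      eLpNorm u 2 μ ^ p * μ (closedBall 0 r) ^ (1 - p / 2) +
        eLpNorm (fun x => ‖x‖ ^ α * ‖u x‖) 2 μ ^ p *
          (∫⁻ x in (closedBall (0 : E) r)ᶜ, ‖x‖ₑ ^ (-(α * (2 * p / (2 - p)))) ∂μ) ^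
            (1 - p / 2) := by
  rw [← lintegral_add_compl _ measurableSet_closedBall]
  gcongr
  · calc ∫⁻ x in closedBall 0 r, ‖u x‖ₑ ^ p ∂μ
        ≤ (∫⁻ x in closedBall 0 r, (1 * ‖u x‖ₑ) ^ (2 : ℝ) ∂μ) ^ (p / 2) *
            (∫⁻ x in closedBall 0 r, 1 ^ (-(2 * p / (2 - p))) ∂μ) ^ (1 - p / 2) :=
          lintegral_rpow_le_of_weight hp0 hp2 hu.enorm.restrict aemeasurable_const
            (by simp) (by simp)
      _ ≤ eLpNorm u 2 μ ^ p * μ (closedBall 0 r) ^ (1 - p / 2) := by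
          rw [eLpNorm_two_rpow_eq_lintegral]
          simp only [one_mul, ENNReal.one_rpow, setLIntegral_const]
          gcongr
          exact Measure.restrict_le_self
  · have hρ : ∀ x, ‖x‖ₑ ^ α * ‖u x‖ₑ = ‖‖x‖ ^ α * ‖u x‖‖ₑ := fun x => by
      rw [enorm_mul, Real.enorm_rpow_of_nonneg (norm_nonneg x) hα.le, enorm_norm, enorm_norm]
    calc ∫⁻ x in (closedBall 0 r)ᶜ, ‖u x‖ₑ ^ p ∂μ
        ≤ (∫⁻ x in (closedBall 0 r)ᶜ, (‖x‖ₑ ^ α * ‖u x‖ₑ) ^ (2 : ℝ) ∂μ) ^ (p / 2) *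
            (∫⁻ x in (closedBall 0 r)ᶜ, (‖x‖ₑ ^ α) ^ (-(2 * p / (2 - p))) ∂μ) ^ (1 - p / 2) := by
          refine lintegral_rpow_le_of_weight hp0 hp2 hu.enorm.restrict (by fun_prop)
            ((ae_restrict_iff' measurableSet_closedBall.compl).2 (.of_forall fun x hx => ?_))
            (.of_forall fun x => ENNReal.rpow_ne_top_of_nonneg hα.le enorm_ne_top)
          have hx0 : x ≠ 0 := by
            rintro rfl
            exact hx (mem_closedBall_self hr.le)
          exact (ENNReal.rpow_pos (enorm_pos.2 hx0) enorm_ne_top).ne'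
      _ ≤ _ := by
          simp only [hρ, ← ENNReal.rpow_mul, neg_mul_eq_mul_neg]
          rw [eLpNorm_two_rpow_eq_lintegral]
          gcongr
          exact Measure.restrict_le_self

lemma ae_eq_zero_of_norm_rpow_mul_norm_ae_eq_zero [NullSingletonClass μ] {α : ℝ} {u : E → F}
    (h : (fun x => ‖x‖ ^ α * ‖u x‖) =ᵐ[μ] 0) : u =ᵐ[μ] 0 := by
  filter_upwards [h, measure_eq_zero_iff_ae_notMem.1 (measure_singleton (0 : E))] with x hx hx0
  have hpos : 0 < ‖x‖ ^ α := Real.rpow_pos_of_pos (norm_pos_iff.2 hx0) α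
  simpa [hpos.ne'] using hx

end Weight

lemma rpow_mul_div_rpow {a b : ℝ} (ha : 0 < a) (hb : 0 ≤ b) (p γ : ℝ) :
    a ^ p * (b / a) ^ γ = a ^ (p - γ) * b ^ γ := by
  rw [Real.div_rpow hb ha.le, Real.rpow_sub ha]
  ring

lemma rpow_mul_add_rpow_mul_at_balanced_radius {a b α θ p n s m K : ℝ} (ha : 0 < a)
    (hb : 0 < b) (hα : α ≠ 0) (hm : 0 ≤ m) (hK : 0 ≤ K) (hsθ : s * θ = α * p) :
    a ^ p * (((b / a) ^ α⁻¹) ^ n * m) ^ θ + b ^ p * (K * ((b / a) ^ α⁻¹) ^ (n - s)) ^ θ =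
      (m ^ θ + K ^ θ) * a ^ (p - n * θ / α) * b ^ (n * θ / α) := by
  have hba : 0 < b / a := div_pos hb ha
  have hexp : α⁻¹ * (n - s) * θ = -(p - n * θ / α) := by
    field_simp
    linear_combination -hsθ
  have hnear := rpow_mul_div_rpow ha hb.le p (n * θ / α)
  have hfar := rpow_mul_div_rpow hb ha.le p (p - n * θ / α)
  rw [sub_sub_cancel] at hfar
  rw [← Real.rpow_mul hba.le, ← Real.rpow_mul hba.le, Real.mul_rpow (by positivity) hm,
    Real.mul_rpow hK (by positivity), ← Real.rpow_mul hba.le, ← Real.rpow_mul hba.le, hexp,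
    Real.rpow_neg hba.le, ← Real.inv_rpow hba.le, inv_div,
    show α⁻¹ * n * θ = n * θ / α by field_simp]
  linear_combination m ^ θ * hnear + K ^ θ * hfar

section AddHaar
variable {E F : Type*} [NormedAddCommGroup E] [NormedSpace ℝ E] [FiniteDimensional ℝ E]
  [MeasurableSpace E] [BorelSpace E] {μ : Measure E} [μ.IsAddHaarMeasure] [NormedAddCommGroup F]

lemma setLIntegral_compl_closedBall_enorm_rpow_neg [Nontrivial E] {s r : ℝ}
    (hs : finrank ℝ E < s) (hr : 0 < r) :
    ∫⁻ x in (closedBall (0 : E) r)ᶜ, ‖x‖ₑ ^ (-s) ∂μ =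
      ENNReal.ofReal (finrank ℝ E * μ.real (ball 0 1) / (s - finrank ℝ E) *
        r ^ ((finrank ℝ E : ℝ) - s)) := by
  -- polar coordinates (`integral_fun_norm_addHaar`) reduce this to `n |B₁| ∫_r^∞ y^(n-1-s) dy`
  set g : ℝ → ℝ := (Ioi r).indicator fun y => y ^ (-s)
  have hg : ∀ x : E, (closedBall (0 : E) r)ᶜ.indicator (fun x => ‖x‖ₑ ^ (-s)) x =
      ENNReal.ofReal (g ‖x‖) := fun x => by
    by_cases hx : r < ‖x‖
    · have hx' : x ∈ (closedBall (0 : E) r)ᶜ := by simpa using hx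
      rw [indicator_of_mem hx', ← ofReal_norm, ENNReal.ofReal_rpow_of_pos (hr.trans hx)]
      simp [g, hx]
    · have hx' : x ∉ (closedBall (0 : E) r)ᶜ := by simpa using hx
      simp [g, hx, hx']
  have hradial : EqOn (fun y : ℝ => y ^ (finrank ℝ E - 1) • g y)
      ((Ioi r).indicator fun y => y ^ ((finrank ℝ E : ℝ) - 1 - s)) (Ioi 0) := fun y hy => by
    by_cases hyr : r < y
    · simp only [g, indicator_of_mem (mem_Ioi.2 hyr), smul_eq_mul]
      rw [← Real.rpow_natCast, ← Real.rpow_add hy, Nat.cast_sub finrank_pos, Nat.cast_one,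
        sub_eq_add_neg _ s]
    · simp [g, hyr]
  have hint : Integrable (fun x : E => g ‖x‖) μ := by
    rw [integrable_fun_norm_addHaar, integrableOn_congr_fun hradial measurableSet_Ioi]
    exact ((integrableOn_Ioi_rpow_of_lt (by linarith) hr).integrable_indicator
      measurableSet_Ioi).integrableOn
  have hg0 : 0 ≤ᵐ[μ] fun x => g ‖x‖ := Filter.Eventually.of_forall fun x =>
    indicator_nonneg (fun y hy => Real.rpow_nonneg (hr.trans hy).le _) _
  rw [← lintegral_indicator measurableSet_closedBall.compl, lintegral_congr hg,
    ← ofReal_integral_eq_lintegral_ofReal hint hg0, integral_fun_norm_addHaar,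
    setIntegral_congr_fun measurableSet_Ioi hradial, setIntegral_indicator measurableSet_Ioi,
    Ioi_inter_Ioi, sup_of_le_right hr.le, integral_Ioi_rpow_of_lt (by linarith) hr,
    nsmul_eq_mul, smul_eq_mul, sub_right_comm, sub_add_cancel]
  congr 1
  rw [← neg_sub s, div_neg, neg_div]
  ring

lemma integral_norm_rpow_le_closedBall_add_compl [Nontrivial E] {p α r : ℝ} (hp0 : 0 < p)
    (hp2 : p < 2) (hα : 0 < α) (hr : 0 < r) (hs : finrank ℝ E < α * (2 * p / (2 - p)))
    {u : E → F} (hu : MemLp u 2 μ) (hw : MemLp (fun x => ‖x‖ ^ α * ‖u x‖) 2 μ) :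
    ∫ x, ‖u x‖ ^ p ∂μ ≤
      (eLpNorm u 2 μ).toReal ^ p * (r ^ (finrank ℝ E : ℝ) * μ.real (ball 0 1)) ^ (1 - p / 2) +
        (eLpNorm (fun x => ‖x‖ ^ α * ‖u x‖) 2 μ).toReal ^ p *
          (finrank ℝ E * μ.real (ball 0 1) / (α * (2 * p / (2 - p)) - finrank ℝ E) *
            r ^ (finrank ℝ E - α * (2 * p / (2 - p)))) ^ (1 - p / 2) := by
  have hθ : 0 ≤ 1 - p / 2 := by linarith
  have hK : 0 ≤ finrank ℝ E * μ.real (ball 0 1) / (α * (2 * p / (2 - p)) - finrank ℝ E) :=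
    div_nonneg (by positivity) (by linarith)
  have key := lintegral_enorm_rpow_le_closedBall_add_compl (μ := μ) hp0 hp2 hα hr hu.1
  rw [setLIntegral_compl_closedBall_enorm_rpow_neg hs hr, Measure.addHaar_closedBall _ _ hr.le,
    ← ofReal_measureReal measure_ball_lt_top.ne, ← ENNReal.ofReal_mul (by positivity),
    ← ENNReal.ofReal_toReal hu.eLpNorm_ne_top, ← ENNReal.ofReal_toReal hw.eLpNorm_ne_top,
    ENNReal.ofReal_rpow_of_nonneg ENNReal.toReal_nonneg hp0.le,
    ENNReal.ofReal_rpow_of_nonneg ENNReal.toReal_nonneg hp0.le,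
    ENNReal.ofReal_rpow_of_nonneg (by positivity) hθ,
    ENNReal.ofReal_rpow_of_nonneg (mul_nonneg hK (by positivity)) hθ,
    ← ENNReal.ofReal_mul (by positivity), ← ENNReal.ofReal_mul (by positivity),
    ← ENNReal.ofReal_add (by positivity) (by positivity), ← Real.rpow_natCast] at key
  rw [integral_norm_rpow_eq_toReal_lintegral hp0.le hu.1]
  exact ENNReal.toReal_le_of_le_ofReal (by positivity) key

theorem exists_integral_norm_rpow_le_mul_rpow_mul_rpow [Nontrivial E] {p α : ℝ} (hp0 : 0 < p)
    (hp2 : p < 2) (hα : 0 < α) (hs : finrank ℝ E < α * (2 * p / (2 - p))) :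
    ∃ C > 0, ∀ u : E → F, MemLp u 2 μ → MemLp (fun x => ‖x‖ ^ α * ‖u x‖) 2 μ →
      ∫ x, ‖u x‖ ^ p ∂μ ≤
        C * (eLpNorm u 2 μ).toReal ^ (p - finrank ℝ E * (1 - p / 2) / α) *
          (eLpNorm (fun x => ‖x‖ ^ α * ‖u x‖) 2 μ).toReal ^ (finrank ℝ E * (1 - p / 2) / α) := by
  set m := μ.real (ball 0 1)
  have hm : 0 < m := ENNReal.toReal_pos (measure_ball_pos _ _ one_pos).ne' measure_ball_lt_top.ne
  set K := finrank ℝ E * m / (α * (2 * p / (2 - p)) - finrank ℝ E)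
  have hK : 0 < K := div_pos (mul_pos (Nat.cast_pos.2 finrank_pos) hm) (by linarith)
  refine ⟨m ^ (1 - p / 2) + K ^ (1 - p / 2),
    add_pos (Real.rpow_pos_of_pos hm _) (Real.rpow_pos_of_pos hK _), fun u hu hw => ?_⟩
  set a := (eLpNorm u 2 μ).toReal
  set b := (eLpNorm (fun x => ‖x‖ ^ α * ‖u x‖) 2 μ).toReal
  by_cases hu0 : u =ᵐ[μ] 0
  · rw [integral_eq_zero_of_ae (by filter_upwards [hu0] with x hx; simp [hx, hp0.ne'])]
    positivity
  have ha : 0 < a := ENNReal.toReal_pos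
    (fun h => hu0 ((eLpNorm_eq_zero_iff hu.1 two_ne_zero).1 h)) hu.eLpNorm_ne_top
  have hb : 0 < b := ENNReal.toReal_pos (fun h => hu0 (ae_eq_zero_of_norm_rpow_mul_norm_ae_eq_zero
    ((eLpNorm_eq_zero_iff hw.1 two_ne_zero).1 h))) hw.eLpNorm_ne_top
  refine (integral_norm_rpow_le_closedBall_add_compl hp0 hp2 hα
    (Real.rpow_pos_of_pos (div_pos hb ha) α⁻¹) hs hu hw).trans_eq ?_
  have hp2' : 2 - p ≠ 0 := by linarith
  exact rpow_mul_add_rpow_mul_at_balanced_radius ha hb hα.ne' hm.le hK.le (by field_simp)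

end AddHaar

theorem weighted_interpolation_general (d : ℕ) (hd : 1 ≤ d) (α η : ℝ) (hα0 : 0 < α)
    (hη0 : 0 < η) (hη : η < 4 * α / (d + 2 * α)) :
    ∃ C : ℝ, 0 < C ∧ ∀ u : EuclideanSpace ℝ (Fin d) → ℂ, Measurable u →
      MemLp u 2 volume →
      MemLp (fun x => ‖x‖ ^ α * ‖u x‖) 2 volume →
      ∫ x, ‖u x‖ ^ (2 - η) ≤
        C * (eLpNorm u 2 volume).toReal ^ (2 - η - d * η / (2 * α)) *
          (eLpNorm (fun x => ‖x‖ ^ α * ‖u x‖) 2 volume).toReal ^ (d * η / (2 * α)) := by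
  have : Nontrivial (EuclideanSpace ℝ (Fin d)) :=
    Module.nontrivial_of_finrank_pos (R := ℝ) (by rw [finrank_euclideanSpace_fin]; omega)
  have hηd : η * (d + 2 * α) < 4 * α := (lt_div_iff₀ (by positivity)).1 hη
  have hη2 : η < 2 := by nlinarith
  have hs : (finrank ℝ (EuclideanSpace ℝ (Fin d)) : ℝ) < α * (2 * (2 - η) / (2 - (2 - η))) := by
    rw [finrank_euclideanSpace_fin, sub_sub_cancel, mul_div_assoc', lt_div_iff₀ hη0]
    linarith
  obtain ⟨C, hC, hbound⟩ := exists_integral_norm_rpow_le_mul_rpow_mul_rpow (μ := volume) (F := ℂ)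
    (by linarith) (by linarith) hα0 hs
  refine ⟨C, hC, fun u _ hu hw => ?_⟩
  have hexp : (d : ℝ) * (1 - (2 - η) / 2) / α = d * η / (2 * α) := by ring
  simpa only [finrank_euclideanSpace_fin, hexp] using hbound u hu hw

/-- Weighted interpolation inequality: for `0 < α ≤ 1` and `0 < η < 4α/(d+2α)`,
`∫ |u|^{2−η} ≤ C ‖u‖_{L²}^{2−η−dη/(2α)} ‖|x|^α u‖_{L²}^{dη/(2α)}`. -/
theorem weighted_interpolation (d : ℕ) (hd : 1 ≤ d) (α η : ℝ) (hα0 : 0 < α) (hα1 : α ≤ 1)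
    (hη0 : 0 < η) (hη : η < 4 * α / (d + 2 * α)) :
    ∃ C : ℝ, 0 < C ∧ ∀ u : EuclideanSpace ℝ (Fin d) → ℂ, Measurable u →
      MemLp u 2 volume →
      MemLp (fun x => ‖x‖ ^ α * ‖u x‖) 2 volume →
      ∫ x, ‖u x‖ ^ (2 - η) ≤
        C * (eLpNorm u 2 volume).toReal ^ (2 - η - d * η / (2 * α)) *
          (eLpNorm (fun x => ‖x‖ ^ α * ‖u x‖) 2 volume).toReal ^ (d * η / (2 * α)) :=
  weighted_interpolation_general d hd α η hα0 hη0 hη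
end

section
/- Let λ ∈ ℝ. If for each j = 1,…,d, u_j : ℝ × ℝ → ℂ is a (smooth, nonvanishing) solution of the one-dimensional equation i∂_t u_j + (1/2)∂_{x_j}² u_j = λ ln(|u_j|²) u_j, then u(t,x) = ∏_{j=1}^d u_j(t, x_j) solves i∂_t u + (1/2)Δu = λ ln(|u|²)u on ℝ × ℝ^d. -/
/-- The Laplacian of `f` at `x`, as the sum of second derivatives along coordinate axes. -/
noncomputable def lap {d : ℕ} (f : EuclideanSpace ℝ (Fin d) → ℂ)
    (x : EuclideanSpace ℝ (Fin d)) : ℂ :=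
  ∑ i : Fin d, iteratedDeriv 2 (fun h : ℝ => f (x + h • EuclideanSpace.single i (1 : ℝ))) 0

lemma myIteratedDeriv_mul_const {n : ℕ} {f : ℝ → ℂ} (hf : ContDiff ℝ n f) (c : ℂ) (x : ℝ) :
    iteratedDeriv n (fun z => f z * c) x = iteratedDeriv n f x * c := by
  simp_rw [← iteratedDerivWithin_univ, mul_comm _ c]
  have := iteratedDerivWithin_const_smul (s := Set.univ) (Set.mem_univ x) uniqueDiffOn_univ c
    hf.contDiffWithinAt
  simpa [smul_eq_mul] using this

/-- Tensorization: if each `u_j` is a smooth, nonvanishing solution of the 1D logarithmic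
Schrödinger equation, then `u(t,x) = ∏_j u_j(t, x_j)` solves the `d`-dimensional one. -/
theorem logNLS_tensorization (d : ℕ) (hd : 1 ≤ d) (lam : ℝ)
    (uj : Fin d → ℝ → ℝ → ℂ)
    (hsmooth : ∀ j, ContDiff ℝ (⊤ : ℕ∞) (fun p : ℝ × ℝ => uj j p.1 p.2))
    (hnz : ∀ j t x, uj j t x ≠ 0)
    (huj : ∀ (j : Fin d) (t x : ℝ),
      Complex.I * deriv (fun s => uj j s x) t +
          (1 / 2 : ℂ) * iteratedDeriv 2 (fun y => uj j t y) x =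
        (lam : ℂ) * (Real.log (‖uj j t x‖ ^ 2) : ℂ) * uj j t x) :
    let u : ℝ → EuclideanSpace ℝ (Fin d) → ℂ := fun t x => ∏ j : Fin d, uj j t (x j)
    ∀ (t : ℝ) (x : EuclideanSpace ℝ (Fin d)),
      Complex.I * deriv (fun s => u s x) t + (1 / 2 : ℂ) * lap (u t) x =
        (lam : ℂ) * (Real.log (‖u t x‖ ^ 2) : ℂ) * u t x := by
  intro u t x
  have hdifft : ∀ (j : Fin d) (y : ℝ), DifferentiableAt ℝ (fun s => uj j s y) t := by
    intro j y
    exact (((hsmooth j).comp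
      (contDiff_id.prodMk contDiff_const)).differentiable (by simp)).differentiableAt
  have hx_cd : ∀ (j : Fin d), ContDiff ℝ (⊤ : ℕ∞) (fun y => uj j t y) := fun j =>
    (hsmooth j).comp (contDiff_const.prodMk contDiff_id)
  -- time derivative of the product
  have hderiv : deriv (fun s => u s x) t =
      ∑ j : Fin d, (∏ k ∈ Finset.univ.erase j, uj k t (x k)) * deriv (fun s => uj j s (x j)) t := by
    have := deriv_finset_prod (u := Finset.univ) (f := fun (j : Fin d) s => uj j s (x j)) (x := t)
      (fun j _ => hdifft j (x j))
    simpa [u, smul_eq_mul, Finset.prod_fn] using this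
  -- laplacian of the product
  have hlap : lap (u t) x = ∑ i : Fin d,
      iteratedDeriv 2 (fun y => uj i t y) (x i) * ∏ k ∈ Finset.univ.erase i, uj k t (x k) := by
    unfold lap
    refine Finset.sum_congr rfl fun i _ => ?_
    have key : (fun h : ℝ => u t (x + h • EuclideanSpace.single i (1 : ℝ))) =
        fun h : ℝ => uj i t (x i + h) * ∏ k ∈ Finset.univ.erase i, uj k t (x k) := by
      funext h
      simp only [u]
      rw [← Finset.mul_prod_erase Finset.univ _ (Finset.mem_univ i)]
      congr 1
      · congr 1
        simp [EuclideanSpace.single_apply]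
      · refine Finset.prod_congr rfl fun k hk => ?_
        have hki : k ≠ i := Finset.ne_of_mem_erase hk
        congr 1
        simp [EuclideanSpace.single_apply, hki]
    rw [key]
    have hc : ContDiff ℝ 2 (fun h : ℝ => uj i t (x i + h)) :=
      ((hx_cd i).of_le (WithTop.coe_le_coe.mpr le_top)).comp (contDiff_const.add contDiff_id)
    rw [myIteratedDeriv_mul_const hc]
    congr 1
    have h0 := congrFun (iteratedDeriv_comp_const_add 2 (fun y => uj i t y) (x i)) 0
    simpa using h0
  -- log of the product
  have hlog : Real.log (‖u t x‖ ^ 2) =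
      ∑ j : Fin d, Real.log (‖uj j t (x j)‖ ^ 2) := by
    simp only [u]
    rw [norm_prod, ← Finset.prod_pow, Real.log_prod]
    intro j _
    exact pow_ne_zero 2 (by simpa using hnz j t (x j))
  have hprod : ∀ j : Fin d, uj j t (x j) * ∏ k ∈ Finset.univ.erase j, uj k t (x k) = u t x := by
    intro j
    simp only [u]
    exact Finset.mul_prod_erase Finset.univ (fun k => uj k t (x k)) (Finset.mem_univ j)
  rw [hderiv, hlap, hlog, Finset.mul_sum, Finset.mul_sum, ← Finset.sum_add_distrib]
  have hterm : ∀ j : Fin d,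
      Complex.I * ((∏ k ∈ Finset.univ.erase j, uj k t (x k)) * deriv (fun s => uj j s (x j)) t) +
        (1 / 2 : ℂ) * (iteratedDeriv 2 (fun y => uj j t y) (x j) *
          ∏ k ∈ Finset.univ.erase j, uj k t (x k)) =
      (lam : ℂ) * (Real.log (‖uj j t (x j)‖ ^ 2) : ℂ) * u t x := by
    intro j
    calc Complex.I * ((∏ k ∈ Finset.univ.erase j, uj k t (x k)) * deriv (fun s => uj j s (x j)) t) +
        (1 / 2 : ℂ) * (iteratedDeriv 2 (fun y => uj j t y) (x j) *
          ∏ k ∈ Finset.univ.erase j, uj k t (x k))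
        = (Complex.I * deriv (fun s => uj j s (x j)) t +
            (1 / 2 : ℂ) * iteratedDeriv 2 (fun y => uj j t y) (x j)) *
            ∏ k ∈ Finset.univ.erase j, uj k t (x k) := by ring
      _ = ((lam : ℂ) * (Real.log (‖uj j t (x j)‖ ^ 2) : ℂ) * uj j t (x j)) *
            ∏ k ∈ Finset.univ.erase j, uj k t (x k) := by rw [huj j t (x j)]
      _ = (lam : ℂ) * (Real.log (‖uj j t (x j)‖ ^ 2) : ℂ) *
            (uj j t (x j) * ∏ k ∈ Finset.univ.erase j, uj k t (x k)) := by ring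
      _ = (lam : ℂ) * (Real.log (‖uj j t (x j)‖ ^ 2) : ℂ) * u t x := by rw [hprod j]
  rw [Finset.sum_congr rfl fun j _ => hterm j]
  push_cast
  rw [Finset.mul_sum, Finset.sum_mul]
end

section
/- Let λ > 0 and let τ solve τ'' = 2λ/τ, τ(0)=1, τ'(0)=0. Then τ(t)/(2t√(λ ln t)) → 1 and τ'(t)/(2√(λ ln t)) → 1 as t → ∞. -/
open Filter Set


lemma sub_mono_of_deriv_le {f g : ℝ → ℝ} {T : ℝ}
    (hf : ∀ t ∈ Set.Ici T, DifferentiableAt ℝ f t)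
    (hg : ∀ t ∈ Set.Ici T, DifferentiableAt ℝ g t)
    (hle : ∀ t ∈ Set.Ioi T, deriv f t ≤ deriv g t) :
    ∀ t ∈ Set.Ici T, f t - f T ≤ g t - g T := by
  have hmono : MonotoneOn (fun t => g t - f t) (Set.Ici T) := by
    apply monotoneOn_of_deriv_nonneg (convex_Ici T)
    · exact fun t ht => ((hg t ht).sub (hf t ht)).continuousAt.continuousWithinAt
    · intro t ht
      rw [interior_Ici] at ht
      exact ((hg t (Set.mem_Ici.mpr (Set.mem_Ioi.mp ht).le)).sub (hf t (Set.mem_Ici.mpr (Set.mem_Ioi.mp ht).le))).differentiableWithinAt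
    · intro t ht
      rw [interior_Ici] at ht
      rw [deriv_fun_sub (hg t (Set.mem_Ici.mpr (Set.mem_Ioi.mp ht).le)) (hf t (Set.mem_Ici.mpr (Set.mem_Ioi.mp ht).le))]
      linarith [hle t ht]
  intro t ht
  have := hmono (Set.self_mem_Ici) ht ht
  simp only at this
  linarith

lemma lhopital_atTop {f g : ℝ → ℝ} {L : ℝ}
    (hf : ∀ᶠ t in atTop, DifferentiableAt ℝ f t)
    (hg : ∀ᶠ t in atTop, DifferentiableAt ℝ g t)
    (hgtop : Tendsto g atTop atTop)
    (hg' : ∀ᶠ t in atTop, 0 < deriv g t)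
    (hquot : Tendsto (fun t => deriv f t / deriv g t) atTop (nhds L)) :
    Tendsto (fun t => f t / g t) atTop (nhds L) := by
  rw [Metric.tendsto_nhds]
  intro ε hε
  have hq : ∀ᶠ t in atTop, |deriv f t / deriv g t - L| < ε / 2 := by
    have := (Metric.tendsto_nhds.1 hquot) (ε / 2) (by linarith)
    simpa [Real.dist_eq] using this
  obtain ⟨T, hT⟩ := eventually_atTop.1 (hf.and (hg.and (hg'.and hq)))
  -- bounds on [T, ∞)
  have hfd : ∀ t ∈ Set.Ici T, DifferentiableAt ℝ f t := fun t ht => (hT t ht).1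
  have hgd : ∀ t ∈ Set.Ici T, DifferentiableAt ℝ g t := fun t ht => (hT t ht).2.1
  have hub : ∀ t ∈ Set.Ici T, f t - f T ≤ (L + ε/2) * g t - (L + ε/2) * g T := by
    have := sub_mono_of_deriv_le (f := f) (g := fun t => (L + ε/2) * g t) hfd
      (fun t ht => (hgd t ht).const_mul _) ?_
    · intro t ht; simpa using this t ht
    · intro t ht
      have h1 := hT t (le_of_lt ht)
      rw [deriv_const_mul _ (hgd t (Set.mem_Ici.mpr (Set.mem_Ioi.mp ht).le))]
      have h2 : deriv f t / deriv g t < L + ε/2 := by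
        have := abs_lt.1 h1.2.2.2
        linarith [this.2]
      have h3 := h1.2.2.1
      calc deriv f t = (deriv f t / deriv g t) * deriv g t := by field_simp
        _ ≤ (L + ε/2) * deriv g t := by
            apply mul_le_mul_of_nonneg_right (le_of_lt h2) (le_of_lt h3)
  have hlb : ∀ t ∈ Set.Ici T, (L - ε/2) * g t - (L - ε/2) * g T ≤ f t - f T := by
    have := sub_mono_of_deriv_le (f := fun t => (L - ε/2) * g t) (g := f)
      (fun t ht => (hgd t ht).const_mul _) hfd ?_
    · intro t ht; simpa using this t ht
    · intro t ht
      have h1 := hT t (le_of_lt ht)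
      rw [deriv_const_mul _ (hgd t (Set.mem_Ici.mpr (Set.mem_Ioi.mp ht).le))]
      have h2 : L - ε/2 < deriv f t / deriv g t := by
        have := abs_lt.1 h1.2.2.2
        linarith [this.1]
      have h3 := h1.2.2.1
      calc (L - ε/2) * deriv g t ≤ (deriv f t / deriv g t) * deriv g t := by
            apply mul_le_mul_of_nonneg_right (le_of_lt h2) (le_of_lt h3)
        _ = deriv f t := by field_simp
  set C₁ : ℝ := f T - (L + ε/2) * g T with hC₁
  set C₂ : ℝ := f T - (L - ε/2) * g T with hC₂
  clear_value C₁ C₂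
  have hbig : ∀ᶠ t in atTop, (4 * (|C₁| + |C₂|) / ε + 1) ≤ g t := hgtop.eventually_ge_atTop _
  filter_upwards [hbig, eventually_ge_atTop T] with t hbt htT
  have hgt : 0 < g t := by
    have h4 : 0 ≤ 4 * (|C₁| + |C₂|) / ε := by positivity
    linarith
  have hu : f t ≤ (L + ε/2) * g t + C₁ := by have := hub t htT; rw [hC₁]; linarith
  have hl : (L - ε/2) * g t + C₂ ≤ f t := by have := hlb t htT; rw [hC₂]; linarith
  have hC1 : |C₁| < ε/4 * g t := by
    have : ε * (4 * (|C₁| + |C₂|) / ε + 1) ≤ ε * g t := by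
      apply mul_le_mul_of_nonneg_left hbt (le_of_lt hε)
    have habs : 0 ≤ |C₂| := abs_nonneg _
    rw [mul_add, mul_div_cancel₀ _ (ne_of_gt hε)] at this
    nlinarith [abs_nonneg C₁]
  have hC2 : |C₂| < ε/4 * g t := by
    have : ε * (4 * (|C₁| + |C₂|) / ε + 1) ≤ ε * g t := by
      apply mul_le_mul_of_nonneg_left hbt (le_of_lt hε)
    rw [mul_add, mul_div_cancel₀ _ (ne_of_gt hε)] at this
    nlinarith [abs_nonneg C₁, abs_nonneg C₂]
  rw [Real.dist_eq, abs_lt]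
  constructor
  · have h : L - ε < f t / g t := by
      rw [lt_div_iff₀ hgt]
      nlinarith [neg_abs_le C₂, mul_pos hε hgt]
    linarith
  · have h : f t / g t < L + ε := by
      rw [div_lt_iff₀ hgt]
      nlinarith [le_abs_self C₁, mul_pos hε hgt]
    linarith


lemma aux_lin_top (c : ℝ) : Tendsto (fun x : ℝ => 2 * x + c) atTop atTop := by
  apply tendsto_atTop_add_const_right
  exact (tendsto_id (α := ℝ)).const_mul_atTop two_pos

lemma aux_log_quot (a c : ℝ) (ha : 0 < a) :
    Tendsto (fun x : ℝ => Real.log (a * (2 * x + c)) / x) atTop (nhds 0) := by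
  have h1 : Tendsto (fun x : ℝ => Real.log a / x) atTop (nhds 0) :=
    tendsto_const_nhds.div_atTop (tendsto_id (α := ℝ))
  have h2 : Tendsto (fun x : ℝ => Real.log (2 * x + c) / x) atTop (nhds 0) := by
    have hlin := aux_lin_top c
    have hsmall : Tendsto (fun x : ℝ => Real.log (2 * x + c) / (2 * x + c)) atTop (nhds 0) :=
      (Real.isLittleO_log_id_atTop.tendsto_div_nhds_zero).comp hlin
    have hfrac : Tendsto (fun x : ℝ => (2 * x + c) / x) atTop (nhds 2) := by
      have h : Tendsto (fun x : ℝ => 2 + c / x) atTop (nhds 2) := by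
        simpa using (tendsto_const_nhds (x := (2:ℝ))).add
          ((tendsto_const_nhds (x := c)).div_atTop (tendsto_id (α := ℝ)))
      apply h.congr'
      filter_upwards [eventually_gt_atTop (0:ℝ)] with x hx
      field_simp
    have h := hsmall.mul hfrac
    rw [zero_mul] at h
    apply h.congr'
    filter_upwards [eventually_gt_atTop (0:ℝ), hlin.eventually_gt_atTop 0] with x hx hlx
    field_simp
  have h := h1.add h2
  rw [add_zero] at h
  apply h.congr'
  filter_upwards [(aux_lin_top c).eventually_gt_atTop 0] with x hx
  rw [Real.log_mul (ne_of_gt ha) (ne_of_gt hx), add_div]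

lemma aux_two_x : Tendsto (fun x : ℝ => 2 * x / (2 * x + 1)) atTop (nhds 1) := by
  have h : Tendsto (fun x : ℝ => 1 - 1 / (2 * x + 1)) atTop (nhds 1) := by
    simpa using (tendsto_const_nhds (x := (1:ℝ))).sub
      ((tendsto_const_nhds (x := (1:ℝ))).div_atTop (aux_lin_top 1))
  apply h.congr'
  filter_upwards [eventually_gt_atTop (0:ℝ)] with x hx
  have hne : (2 * x + 1) ≠ 0 := by positivity
  field_simp
  ring


/-- If `τ` solves `τ'' = 2λ/τ`, `τ(0)=1`, `τ'(0)=0` with `λ > 0`, then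
`τ(t) ∼ 2t√(λ ln t)` and `τ'(t) ∼ 2√(λ ln t)` as `t → ∞`. -/
theorem tau_asymptotics (lam : ℝ) (hlam : 0 < lam) (τ : ℝ → ℝ)
    (hpos : ∀ t : ℝ, 0 < τ t)
    (hsmooth : ContDiff ℝ (⊤ : ℕ∞) τ)
    (hode : ∀ t : ℝ, deriv (deriv τ) t = 2 * lam / τ t)
    (h0 : τ 0 = 1) (h0' : deriv τ 0 = 0) :
    Tendsto (fun t : ℝ => τ t / (2 * t * Real.sqrt (lam * Real.log t))) atTop (nhds 1) ∧
      Tendsto (fun t : ℝ => deriv τ t / (2 * Real.sqrt (lam * Real.log t))) atTop (nhds 1) := by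
  have hCinf : ContDiff ℝ ((⊤ : ℕ∞) : WithTop ℕ∞) τ := hsmooth.of_le (by simp)
  have hdiff : Differentiable ℝ τ := (contDiff_infty_iff_deriv.mp hCinf).1
  have hdiff' : Differentiable ℝ (deriv τ) :=
    ((contDiff_infty_iff_deriv.mp hCinf).2).differentiable (by simp)
  -- Energy identity
  have hE : ∀ t, (deriv τ t) ^ 2 = 4 * lam * Real.log (τ t) := by
    intro t
    have key : ∀ s, deriv (fun u => (deriv τ u) ^ 2 - 4 * lam * Real.log (τ u)) s = 0 := by
      intro s
      have h1 : HasDerivAt (deriv τ) (2 * lam / τ s) s := by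
        rw [← hode s]; exact (hdiff' s).hasDerivAt
      have h2 : HasDerivAt (fun u => (deriv τ u) ^ 2)
          (2 * deriv τ s ^ 1 * (2 * lam / τ s)) s := h1.pow 2
      have h3 : HasDerivAt (fun u => Real.log (τ u)) (deriv τ s / τ s) s :=
        (hdiff s).hasDerivAt.log (ne_of_gt (hpos s))
      have h4 := h2.sub (h3.const_mul (4 * lam))
      rw [show deriv (fun u => deriv τ u ^ 2 - 4 * lam * Real.log (τ u)) s = _ from h4.deriv]
      have hτs := ne_of_gt (hpos s)
      field_simp
      ring
    have hEdiff : Differentiable ℝ (fun u => (deriv τ u) ^ 2 - 4 * lam * Real.log (τ u)) := by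
      intro s
      have h1 : HasDerivAt (deriv τ) (2 * lam / τ s) s := by
        rw [← hode s]; exact (hdiff' s).hasDerivAt
      exact ((h1.pow 2).sub (((hdiff s).hasDerivAt.log (ne_of_gt (hpos s))).const_mul
        (4 * lam))).differentiableAt
    have := is_const_of_deriv_eq_zero hEdiff key t 0
    simp only [h0', h0, Real.log_one] at this
    linarith
  have hlog_nonneg : ∀ t, 0 ≤ Real.log (τ t) := fun t => by
    nlinarith [hE t, sq_nonneg (deriv τ t)]
  have hτ1 : ∀ t, 1 ≤ τ t := fun t => (Real.log_nonneg_iff (hpos t)).mp (hlog_nonneg t)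
  have hmono : StrictMono (deriv τ) := by
    apply strictMono_of_deriv_pos
    intro t
    rw [hode t]
    exact div_pos (by linarith) (hpos t)
  have hd_nonneg : ∀ t, 0 ≤ t → 0 ≤ deriv τ t := fun t ht => by
    have := hmono.monotone ht
    rwa [h0'] at this
  -- deriv τ = 2 √(λ log τ) on [0, ∞)
  have heq : ∀ t, 0 ≤ t → deriv τ t = 2 * Real.sqrt (lam * Real.log (τ t)) := by
    intro t ht
    have hnn : 0 ≤ lam * Real.log (τ t) := mul_nonneg hlam.le (hlog_nonneg t)
    have h1 : (deriv τ t) ^ 2 = (2 * Real.sqrt (lam * Real.log (τ t))) ^ 2 := by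
      rw [mul_pow, Real.sq_sqrt hnn, hE t]; ring
    have h2 := congrArg Real.sqrt h1
    rwa [Real.sqrt_sq (hd_nonneg t ht), Real.sqrt_sq (by positivity)] at h2
  -- linear lower bound
  set b := deriv τ 1 with hbdef
  have hb : 0 < b := by
    have := hmono (show (0:ℝ) < 1 by norm_num)
    rwa [h0'] at this
  have hlin0 : ∀ t ∈ Set.Ici (1:ℝ), b * t - b * 1 ≤ τ t - τ 1 := by
    apply sub_mono_of_deriv_le
    · exact fun t _ => (differentiable_id.const_mul b) t
    · exact fun t _ => hdiff t
    · intro t ht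
      have hd : deriv (fun t => b * t) t = b := by
        simpa using ((hasDerivAt_id t).const_mul b).deriv
      rw [hd]
      exact (hmono.monotone (le_of_lt ht)).trans_eq rfl
  have hlin : ∀ t, 2 ≤ t → b / 2 * t ≤ τ t := by
    intro t ht
    have h1 := hlin0 t (by norm_num; linarith)
    have h2 := hτ1 1
    nlinarith
  have htop : Tendsto τ atTop atTop := by
    apply tendsto_atTop_mono' atTop (f₁ := fun t => b / 2 * t)
    · filter_upwards [eventually_ge_atTop (2:ℝ)] with t ht using hlin t ht
    · exact (tendsto_id (α := ℝ)).const_mul_atTop (by linarith)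
  -- sqrt upper bound : τ t ≤ (1 + √λ t)²
  have hsqrt_ub : ∀ t, 0 ≤ t → Real.sqrt (τ t) ≤ 1 + Real.sqrt lam * t := by
    intro t ht
    have key := sub_mono_of_deriv_le (f := fun u => Real.sqrt (τ u))
      (g := fun u => Real.sqrt lam * u) (T := 0)
      (fun u _ => ((hdiff u).hasDerivAt.sqrt (ne_of_gt (hpos u))).differentiableAt)
      (fun u _ => (differentiable_id.const_mul _) u)
      ?_ t ht
    · have h1 : Real.sqrt (τ 0) = 1 := by rw [h0, Real.sqrt_one]
      have h2 : ∀ u : ℝ, deriv (fun u => Real.sqrt lam * u) u = Real.sqrt lam := by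
        intro u; simpa using ((hasDerivAt_id u).const_mul (Real.sqrt lam)).deriv
      simp only [mul_zero] at key
      linarith [key]
    · intro u hu
      have hu0 : (0:ℝ) ≤ u := le_of_lt hu
      have hder : deriv (fun u => Real.sqrt (τ u)) u = deriv τ u / (2 * Real.sqrt (τ u)) :=
        ((hdiff u).hasDerivAt.sqrt (ne_of_gt (hpos u))).deriv
      have hder2 : deriv (fun u => Real.sqrt lam * u) u = Real.sqrt lam := by
        simpa using ((hasDerivAt_id u).const_mul (Real.sqrt lam)).deriv
      rw [hder, hder2, heq u hu0]
      have hτu := hpos u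
      have hsτ : 0 < Real.sqrt (τ u) := Real.sqrt_pos.mpr hτu
      have key2 : Real.sqrt (lam * Real.log (τ u)) ≤ Real.sqrt lam * Real.sqrt (τ u) := by
        rw [← Real.sqrt_mul hlam.le]
        apply Real.sqrt_le_sqrt
        have hlog := Real.log_le_sub_one_of_pos hτu
        nlinarith
      rw [div_le_iff₀ (by positivity)]
      nlinarith [Real.sqrt_nonneg (lam * Real.log (τ u))]
  have hτ_ub : ∀ t, 0 ≤ t → τ t ≤ (1 + Real.sqrt lam * t) ^ 2 := by
    intro t ht
    have h1 := hsqrt_ub t ht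
    have h2 : τ t = Real.sqrt (τ t) ^ 2 := (Real.sq_sqrt (hpos t).le).symm
    rw [h2]
    apply pow_le_pow_left₀ (Real.sqrt_nonneg _) h1
  -- crude log upper bound
  set c : ℝ := 2 * Real.log (1 + Real.sqrt lam) with hcdef
  have hc : 0 ≤ c := by
    have : (1:ℝ) ≤ 1 + Real.sqrt lam := by nlinarith [Real.sqrt_nonneg lam]
    have := Real.log_nonneg this
    positivity
  have hlog_ub : ∀ t, 1 ≤ t → Real.log (τ t) ≤ 2 * Real.log t + c := by
    intro t ht
    have ht0 : (0:ℝ) < t := by linarith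
    have hsl : 0 ≤ Real.sqrt lam := Real.sqrt_nonneg lam
    have h1 : τ t ≤ ((1 + Real.sqrt lam) * t) ^ 2 := by
      have h2 := hτ_ub t (by linarith)
      have h3 : 1 + Real.sqrt lam * t ≤ (1 + Real.sqrt lam) * t := by nlinarith
      have h4 : (0:ℝ) ≤ 1 + Real.sqrt lam * t := by nlinarith
      nlinarith
    have h5 := Real.log_le_log (hpos t) h1
    rw [Real.log_pow, Real.log_mul (by nlinarith) (ne_of_gt ht0)] at h5
    push_cast at h5
    rw [hcdef]
    linarith
  -- bootstrap upper bound
  set G : ℝ → ℝ := fun t => 2 * t * Real.sqrt (lam * (2 * Real.log t + c)) with hGdef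
  have hinner_pos : ∀ t : ℝ, 2 ≤ t → 0 < 2 * Real.log t + c := by
    intro t ht
    have : 0 < Real.log t := Real.log_pos (by linarith)
    linarith
  have hGderiv : ∀ t : ℝ, 2 ≤ t → HasDerivAt G
      (2 * Real.sqrt (lam * (2 * Real.log t + c)) +
        2 * t * ((lam * (2 / t)) / (2 * Real.sqrt (lam * (2 * Real.log t + c))))) t := by
    intro t ht
    have ht0 : (0:ℝ) < t := by linarith
    have hip := hinner_pos t ht
    have hu : HasDerivAt (fun u : ℝ => lam * (2 * Real.log u + c)) (lam * (2 / t)) t := by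
      have h1 : HasDerivAt (fun u : ℝ => 2 * Real.log u + c) (2 * t⁻¹) t := by
        exact ((Real.hasDerivAt_log (ne_of_gt ht0)).const_mul 2).add_const c
      have := h1.const_mul lam
      simpa [div_eq_mul_inv] using this
    have hs : HasDerivAt (fun u : ℝ => Real.sqrt (lam * (2 * Real.log u + c)))
        ((lam * (2 / t)) / (2 * Real.sqrt (lam * (2 * Real.log t + c)))) t :=
      hu.sqrt (by positivity)
    have hid : HasDerivAt (fun u : ℝ => 2 * u) 2 t := by
      simpa using (hasDerivAt_id t).const_mul (2:ℝ)
    have := hid.mul hs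
    rw [hGdef]
    exact this
  have hG_ub : ∀ t ∈ Set.Ici (2:ℝ), τ t - τ 2 ≤ G t - G 2 := by
    apply sub_mono_of_deriv_le
    · exact fun t _ => hdiff t
    · exact fun t ht => (hGderiv t ht).differentiableAt
    · intro t ht
      have ht2 : (2:ℝ) ≤ t := le_of_lt ht
      have ht0 : (0:ℝ) < t := by linarith
      have hip := hinner_pos t ht2
      rw [(hGderiv t ht2).deriv, heq t (by linarith)]
      have h1 : Real.sqrt (lam * Real.log (τ t)) ≤ Real.sqrt (lam * (2 * Real.log t + c)) := by
        apply Real.sqrt_le_sqrt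
        have := hlog_ub t (by linarith)
        nlinarith
      have h2 : 0 ≤ 2 * t * ((lam * (2 / t)) / (2 * Real.sqrt (lam * (2 * Real.log t + c)))) := by
        positivity
      linarith
  -- G tends to infinity
  have h2l : (0:ℝ) < 2 * Real.log 2 + c := hinner_pos 2 le_rfl
  have hGtop : Tendsto G atTop atTop := by
    apply tendsto_atTop_mono' atTop (f₁ := fun t => 2 * Real.sqrt (lam * (2 * Real.log 2 + c)) * t)
    · filter_upwards [eventually_ge_atTop (2:ℝ)] with t ht
      have ht0 : (0:ℝ) < t := by linarith
      have hm : Real.sqrt (lam * (2 * Real.log 2 + c)) ≤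
          Real.sqrt (lam * (2 * Real.log t + c)) := by
        apply Real.sqrt_le_sqrt
        have : Real.log 2 ≤ Real.log t := Real.log_le_log two_pos ht
        nlinarith
      show 2 * Real.sqrt (lam * (2 * Real.log 2 + c)) * t ≤
        2 * t * Real.sqrt (lam * (2 * Real.log t + c))
      nlinarith [Real.sqrt_nonneg (lam * (2 * Real.log 2 + c))]
    · exact (tendsto_id (α := ℝ)).const_mul_atTop (by positivity)
  have hC3 : ∀ᶠ t in atTop, τ t ≤ 2 * G t := by
    filter_upwards [hGtop.eventually_ge_atTop (τ 2 - G 2), eventually_ge_atTop (2:ℝ)]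
      with t h1 h2
    have := hG_ub t h2
    linarith
  have hlogG : ∀ᶠ t in atTop, Real.log (τ t) ≤
      Real.log 4 + Real.log t + Real.log (lam * (2 * Real.log t + c)) / 2 := by
    filter_upwards [hC3, eventually_ge_atTop (2:ℝ)] with t h1 h2
    have ht0 : (0:ℝ) < t := by linarith
    have hip := hinner_pos t h2
    have h3 : 2 * G t = 4 * t * Real.sqrt (lam * (2 * Real.log t + c)) := by
      rw [hGdef]; ring
    have hsp : 0 < Real.sqrt (lam * (2 * Real.log t + c)) := by positivity
    have h4 := Real.log_le_log (hpos t) h1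
    rw [h3, Real.log_mul (by positivity) (ne_of_gt hsp),
      Real.log_mul (by norm_num) (ne_of_gt ht0), Real.log_sqrt (by positivity)] at h4
    linarith
  -- the key limit : log τ t / log t → 1
  have hlogdiv : Tendsto (fun t => Real.log (τ t) / Real.log t) atTop (nhds 1) := by
    apply tendsto_of_tendsto_of_tendsto_of_le_of_le'
      (g := fun t => 1 + Real.log (b / 2) / Real.log t)
      (h := fun t => 1 + (Real.log 4 + Real.log (lam * (2 * Real.log t + c)) / 2) / Real.log t)
    · have h1 : Tendsto (fun t : ℝ => Real.log (b / 2) / Real.log t) atTop (nhds 0) :=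
        tendsto_const_nhds.div_atTop Real.tendsto_log_atTop
      simpa using (tendsto_const_nhds (x := (1:ℝ))).add h1
    · have h1 : Tendsto (fun t : ℝ => Real.log 4 / Real.log t) atTop (nhds 0) :=
        tendsto_const_nhds.div_atTop Real.tendsto_log_atTop
      have h2 : Tendsto (fun t : ℝ => Real.log (lam * (2 * Real.log t + c)) / Real.log t)
          atTop (nhds 0) := (aux_log_quot lam c hlam).comp Real.tendsto_log_atTop
      have h3 : Tendsto (fun t : ℝ =>
          (Real.log 4 + Real.log (lam * (2 * Real.log t + c)) / 2) / Real.log t)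
          atTop (nhds 0) := by
        have h4 := h1.add (h2.div_const 2)
        simp only [zero_div, add_zero] at h4
        apply h4.congr'
        filter_upwards [Real.tendsto_log_atTop.eventually_gt_atTop 0] with t hlt
        field_simp
      simpa using (tendsto_const_nhds (x := (1:ℝ))).add h3
    · filter_upwards [eventually_ge_atTop (2:ℝ)] with t ht
      have hlt : 0 < Real.log t := Real.log_pos (by linarith)
      have hτlb : b / 2 * t ≤ τ t := hlin t ht
      have hbt : 0 < b / 2 * t := by positivity
      have h5 : Real.log (b / 2) + Real.log t ≤ Real.log (τ t) := by
        have := Real.log_le_log hbt hτlb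
        rwa [Real.log_mul (by positivity) (by positivity)] at this
      rw [le_div_iff₀ hlt]
      have hexp : (1 + Real.log (b / 2) / Real.log t) * Real.log t =
          Real.log t + Real.log (b / 2) := by field_simp
      rw [hexp]
      linarith
    · filter_upwards [hlogG, eventually_ge_atTop (2:ℝ)] with t h1 ht
      have hlt : 0 < Real.log t := Real.log_pos (by linarith)
      rw [div_le_iff₀ hlt]
      have hexp : (1 + (Real.log 4 + Real.log (lam * (2 * Real.log t + c)) / 2) / Real.log t) *
          Real.log t = Real.log t + (Real.log 4 + Real.log (lam * (2 * Real.log t + c)) / 2) := by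
        field_simp
      rw [hexp]
      linarith
  -- conclusion for the derivative
  have hsqrtdiv : Tendsto (fun t => Real.sqrt (Real.log (τ t) / Real.log t)) atTop (nhds 1) := by
    have := hlogdiv.sqrt
    rwa [Real.sqrt_one] at this
  have conc2 : Tendsto (fun t : ℝ => deriv τ t / (2 * Real.sqrt (lam * Real.log t)))
      atTop (nhds 1) := by
    apply hsqrtdiv.congr'
    filter_upwards [eventually_ge_atTop (2:ℝ)] with t ht
    have hlt : 0 < Real.log t := Real.log_pos (by linarith)
    have hslt : 0 < Real.sqrt (Real.log t) := Real.sqrt_pos.mpr hlt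
    have hslam : 0 < Real.sqrt lam := Real.sqrt_pos.mpr hlam
    rw [heq t (by linarith), Real.sqrt_mul hlam.le (Real.log (τ t)),
      Real.sqrt_mul hlam.le (Real.log t), Real.sqrt_div (hlog_nonneg t)]
    field_simp
  refine ⟨?_, conc2⟩
  -- conclusion for τ itself, via L'Hôpital
  set g : ℝ → ℝ := fun t => 2 * t * Real.sqrt (lam * Real.log t) with hgdef
  have hgD : ∀ t : ℝ, 2 ≤ t → HasDerivAt g
      (2 * Real.sqrt (lam * Real.log t) +
        2 * t * ((lam * t⁻¹) / (2 * Real.sqrt (lam * Real.log t)))) t := by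
    intro t ht
    have ht0 : (0:ℝ) < t := by linarith
    have hlt : 0 < Real.log t := Real.log_pos (by linarith)
    have hu : HasDerivAt (fun u : ℝ => lam * Real.log u) (lam * t⁻¹) t :=
      (Real.hasDerivAt_log (ne_of_gt ht0)).const_mul lam
    have hs : HasDerivAt (fun u : ℝ => Real.sqrt (lam * Real.log u))
        ((lam * t⁻¹) / (2 * Real.sqrt (lam * Real.log t))) t := hu.sqrt (by positivity)
    have hid : HasDerivAt (fun u : ℝ => 2 * u) 2 t := by
      simpa using (hasDerivAt_id t).const_mul (2:ℝ)
    have := hid.mul hs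
    rw [hgdef]
    exact this
  have hgtop : Tendsto g atTop atTop := by
    have h3 : (0:ℝ) < Real.log 2 := Real.log_pos (by norm_num)
    apply tendsto_atTop_mono' atTop (f₁ := fun t => 2 * Real.sqrt (lam * Real.log 2) * t)
    · filter_upwards [eventually_ge_atTop (2:ℝ)] with t ht
      have ht0 : (0:ℝ) < t := by linarith
      have hm : Real.sqrt (lam * Real.log 2) ≤ Real.sqrt (lam * Real.log t) := by
        apply Real.sqrt_le_sqrt
        have : Real.log 2 ≤ Real.log t := Real.log_le_log two_pos ht
        nlinarith
      show 2 * Real.sqrt (lam * Real.log 2) * t ≤ 2 * t * Real.sqrt (lam * Real.log t)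
      nlinarith [Real.sqrt_nonneg (lam * Real.log 2)]
    · exact (tendsto_id (α := ℝ)).const_mul_atTop (by positivity)
  apply lhopital_atTop (Eventually.of_forall (fun t => hdiff t)) ?_ hgtop ?_ ?_
  · filter_upwards [eventually_ge_atTop (2:ℝ)] with t ht
    exact (hgD t ht).differentiableAt
  · filter_upwards [eventually_ge_atTop (2:ℝ)] with t ht
    have ht0 : (0:ℝ) < t := by linarith
    have hlt : 0 < Real.log t := Real.log_pos (by linarith)
    rw [(hgD t ht).deriv]
    positivity
  · -- quotient of derivatives tends to 1
    have hlim : Tendsto (fun t : ℝ => Real.sqrt (Real.log (τ t) / Real.log t) *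
        (2 * Real.log t / (2 * Real.log t + 1))) atTop (nhds 1) := by
      have h2 := aux_two_x.comp Real.tendsto_log_atTop
      have := hsqrtdiv.mul h2
      rwa [mul_one] at this
    apply hlim.congr'
    filter_upwards [eventually_ge_atTop (2:ℝ)] with t ht
    have ht0 : (0:ℝ) < t := by linarith
    have hlt : 0 < Real.log t := Real.log_pos (by linarith)
    have hslt : 0 < Real.sqrt (Real.log t) := Real.sqrt_pos.mpr hlt
    have hslam : 0 < Real.sqrt lam := Real.sqrt_pos.mpr hlam
    rw [(hgD t ht).deriv, heq t (by linarith)]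
    rw [Real.sqrt_mul hlam.le (Real.log (τ t)), Real.sqrt_mul hlam.le (Real.log t),
      Real.sqrt_div (hlog_nonneg t)]
    have ht' : t ≠ 0 := ne_of_gt ht0
    have h1 : 2 * t * ((lam * t⁻¹) / (2 * (Real.sqrt lam * Real.sqrt (Real.log t))))
        = lam / (Real.sqrt lam * Real.sqrt (Real.log t)) := by
      field_simp
    rw [h1]
    set S1 := Real.sqrt (Real.log (τ t)) with hS1
    set S2 := Real.sqrt (Real.log t) with hS2
    set SL := Real.sqrt lam with hSL
    have hlam_eq : SL * SL = lam := Real.mul_self_sqrt hlam.le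
    have hlog_eq : S2 * S2 = Real.log t := Real.mul_self_sqrt hlt.le
    rw [← hlam_eq, ← hlog_eq]
    have hS2ne : S2 ≠ 0 := ne_of_gt hslt
    have hSLne : SL ≠ 0 := ne_of_gt hslam
    have hdenne : 2 * (S2 * S2) + 1 ≠ 0 := by positivity
    field_simp
end

section
/- Let α₀ > 0, β₀ ∈ ℝ, λ ∈ ℝ, and let r solve the ODE r'' = α₀²/r³ + 2λα₀/r with r(0) = 1, r'(0) = −β₀, on its maximal interval of existence in positive time. Then r satisfies the first integral (r'(t))² = β₀² + α₀² − α₀²/r(t)² + 4λα₀ ln r(t), there exists δ > 0 with r(t) ≥ δ for all t in the interval, and the solution is global in positive time. -/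
/-!
Multiplying the equation by `r'` shows that the energy `r'² + α₀²/r² − 4λα₀ log r` is conserved.
Since `α₀ > 0`, the potential `α₀²/r² − 4λα₀ log r` tends to `+∞` as `r → 0⁺`, so the initial
energy confines `r` to `r > d` for some `d > 0`. To construct the solution, the force is frozen
below `d / 2`: the resulting first-order system is globally Lipschitz, hence has a global solution,
and the energy barrier shows that the frozen region is never entered.
-/

open Set Filter Topology
open scoped NNReal

namespace LipschitzWith

variable {E : Type*} [NormedAddCommGroup E] [NormedSpace ℝ E] {F : E → E} {K : ℝ≥0}

theorem exists_eq_forall_mem_Ioo_hasDerivAt [CompleteSpace E] (hF : LipschitzWith K F)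
    (t₀ : ℝ) (x₀ : E) :
    ∃ u : ℝ → E, u t₀ = x₀ ∧ ∀ t ∈ Ioo (t₀ - ((K : ℝ) + 1)⁻¹) (t₀ + ((K : ℝ) + 1)⁻¹),
      HasDerivAt u (F (u t)) t := by
  set ε : ℝ := ((K : ℝ) + 1)⁻¹
  have hε : 0 < ε := by positivity
  -- on the ball of radius `a = ‖F x₀‖ + 1` the field is bounded by `L ≤ (K + 1) a`
  set a : ℝ≥0 := ⟨‖F x₀‖ + 1, by positivity⟩
  set L : ℝ≥0 := ⟨‖F x₀‖ + K * a, by positivity⟩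
  have hbound : ∀ x ∈ Metric.closedBall x₀ a, ‖F x‖ ≤ L := fun x hx =>
    calc ‖F x‖ ≤ ‖F x₀‖ + ‖F x - F x₀‖ := norm_le_insert' _ _
      _ ≤ ‖F x₀‖ + K * ‖x - x₀‖ := by gcongr; exact hF.norm_sub_le x x₀
      _ ≤ ‖F x₀‖ + K * a := by gcongr; exact mem_closedBall_iff_norm.mp hx
  have hpl : IsPicardLindelof (fun _ => F) (tmin := t₀ - ε) (tmax := t₀ + ε)
      ⟨t₀, by constructor <;> linarith⟩ x₀ a 0 L K := by
    refine .of_time_independent hbound hF.lipschitzOnWith ?_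
    simp only [add_sub_cancel_left, sub_sub_cancel, max_self, NNReal.coe_zero, sub_zero]
    show (‖F x₀‖ + K * (‖F x₀‖ + 1)) * ε ≤ ‖F x₀‖ + 1
    rw [← le_div_iff₀ hε, div_inv_eq_mul]
    nlinarith [norm_nonneg (F x₀)]
  obtain ⟨u, hu₀, hu⟩ := hpl.exists_eq_forall_mem_Icc_hasDerivWithinAt₀
  exact ⟨u, hu₀, fun t ht =>
    (hu t (Ioo_subset_Icc_self ht)).hasDerivAt (Icc_mem_nhds ht.1 ht.2)⟩

theorem eqOn_Ioo_of_hasDerivAt (hF : LipschitzWith K F) {u w : ℝ → E} {a b t₀ : ℝ}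
    (ht₀ : t₀ ∈ Ioo a b) (hu : ∀ t ∈ Ioo a b, HasDerivAt u (F (u t)) t)
    (hw : ∀ t ∈ Ioo a b, HasDerivAt w (F (w t)) t) (heq : u t₀ = w t₀) :
    EqOn u w (Ioo a b) :=
  ODE_solution_unique_of_mem_Ioo (v := fun _ => F) (s := fun _ => univ)
    (fun _ _ => hF.lipschitzOnWith) ht₀ (fun t ht => ⟨hu t ht, mem_univ _⟩)
    (fun t ht => ⟨hw t ht, mem_univ _⟩) heq

theorem hasDerivAt_ite_of_hasDerivAt (hF : LipschitzWith K F) {u w : ℝ → E} {a b c d t₀ : ℝ}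
    (hu : ∀ t ∈ Ioo a b, HasDerivAt u (F (u t)) t) (hw : ∀ t ∈ Ioo c d, HasDerivAt w (F (w t)) t)
    (hab : t₀ ∈ Ioo a b) (hcd : t₀ ∈ Ioo c d) (heq : u t₀ = w t₀) (t : ℝ) (ht : t ∈ Ioo a d) :
    HasDerivAt (fun s => if s < t₀ then u s else w s) (F (if t < t₀ then u t else w t)) t := by
  by_cases h : t < t₀
  · have hev : (fun s => if s < t₀ then u s else w s) =ᶠ[𝓝 t] u := by
      filter_upwards [Iio_mem_nhds h] with s hs
      exact if_pos hs
    rw [if_pos h]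
    exact (hu t ⟨ht.1, h.trans hab.2⟩).congr_of_eventuallyEq hev
  · have hagree : EqOn u w (Ioo (max a c) (min b d)) :=
      hF.eqOn_Ioo_of_hasDerivAt ⟨max_lt hab.1 hcd.1, lt_min hab.2 hcd.2⟩
        (fun s hs => hu s ⟨(le_max_left _ _).trans_lt hs.1, hs.2.trans_le (min_le_left _ _)⟩)
        (fun s hs => hw s ⟨(le_max_right _ _).trans_lt hs.1, hs.2.trans_le (min_le_right _ _)⟩)
        heq
    have hev : (fun s => if s < t₀ then u s else w s) =ᶠ[𝓝 t] w := by
      filter_upwards [Ioi_mem_nhds ((max_lt hab.1 hcd.1).trans_le (not_lt.mp h))] with s hs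
      split_ifs with hst
      · exact hagree ⟨hs, hst.trans (lt_min hab.2 hcd.2)⟩
      · rfl
    rw [if_neg h]
    exact (hw t ⟨hcd.1.trans_le (not_lt.mp h), ht.2⟩).congr_of_eventuallyEq hev

variable [CompleteSpace E]

theorem exists_eq_forall_mem_Ioo_neg_hasDerivAt (hF : LipschitzWith K F) (x₀ : E) (T : ℝ) :
    ∃ u : ℝ → E, u 0 = x₀ ∧ ∀ t ∈ Ioo (-T) T, HasDerivAt u (F (u t)) t := by
  obtain ⟨ε, hε, hloc⟩ : ∃ ε > 0, ∀ t₀ x₀, ∃ u : ℝ → E, u t₀ = x₀ ∧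
      ∀ t ∈ Ioo (t₀ - ε) (t₀ + ε), HasDerivAt u (F (u t)) t :=
    ⟨_, by positivity, hF.exists_eq_forall_mem_Ioo_hasDerivAt⟩
  set P : ℝ → Prop := fun T => ∃ u : ℝ → E, u 0 = x₀ ∧ ∀ t ∈ Ioo (-T) T, HasDerivAt u (F (u t)) t
  -- gluing local solutions of uniform half-length `ε` centred at `±(T - ε/2)` gains `ε/2`
  have step : ∀ T, ε / 2 < T → P T → P (T + ε / 2) := by
    rintro T hT ⟨u, hu₀, hu⟩
    obtain ⟨wr, hwr₀, hwr⟩ := hloc (T - ε / 2) (u (T - ε / 2))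
    set u₁ := fun s => if s < T - ε / 2 then u s else wr s
    have hu₁ := hF.hasDerivAt_ite_of_hasDerivAt hu hwr ⟨by linarith, by linarith⟩
      ⟨by linarith, by linarith⟩ hwr₀.symm
    obtain ⟨wl, hwl₀, hwl⟩ := hloc (-T + ε / 2) (u₁ (-T + ε / 2))
    refine ⟨fun s => if s < -T + ε / 2 then wl s else u₁ s, ?_, fun t ht => ?_⟩
    · simp only [u₁]
      rw [if_neg (by linarith), if_pos (by linarith), hu₀]
    · exact hF.hasDerivAt_ite_of_hasDerivAt hwl hu₁ ⟨by linarith, by linarith⟩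
        ⟨by linarith, by linarith⟩ hwl₀ t ⟨by linarith [ht.1], by linarith [ht.2]⟩
  have hP : ∀ n : ℕ, P (ε + n * (ε / 2)) := by
    intro n
    induction n with
    | zero =>
      simpa [P] using hloc 0 x₀
    | succ n ih =>
      convert step _ (lt_add_of_lt_of_nonneg (half_lt_self hε) (by positivity)) ih using 1
      push_cast
      ring
  obtain ⟨n, hn⟩ := exists_nat_ge (T / (ε / 2))
  obtain ⟨u, hu₀, hu⟩ := hP n
  refine ⟨u, hu₀, fun t ht => hu t ⟨?_, ?_⟩⟩ <;>
  · have := (div_le_iff₀ (by positivity)).mp hn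
    linarith [ht.1, ht.2]

theorem exists_eq_forall_hasDerivAt (hF : LipschitzWith K F) (x₀ : E) :
    ∃ u : ℝ → E, u 0 = x₀ ∧ ∀ t, HasDerivAt u (F (u t)) t := by
  choose u hu₀ hu using hF.exists_eq_forall_mem_Ioo_neg_hasDerivAt x₀
  have hagree : ∀ T T' t, |t| < T → |t| < T' → u T t = u T' t := by
    intro T T' t hT hT'
    have hmin : |t| < min T T' := lt_min hT hT'
    exact hF.eqOn_Ioo_of_hasDerivAt (t₀ := 0)
      ⟨by linarith [abs_nonneg t], by linarith [abs_nonneg t]⟩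
      (fun s hs => hu T s (Ioo_subset_Ioo (neg_le_neg (min_le_left _ _)) (min_le_left _ _) hs))
      (fun s hs => hu T' s (Ioo_subset_Ioo (neg_le_neg (min_le_right _ _)) (min_le_right _ _) hs))
      (by rw [hu₀, hu₀]) (abs_lt.mp hmin)
  refine ⟨fun t => u (|t| + 1) t, hu₀ _, fun t => ?_⟩
  have hev : (fun s => u (|s| + 1) s) =ᶠ[𝓝 t] u (|t| + 1) := by
    filter_upwards [Ioo_mem_nhds (show -(|t| + 1) < t by linarith [neg_abs_le t])
      (show t < |t| + 1 by linarith [le_abs_self t])] with s hs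
    exact hagree _ _ s (by linarith) (abs_lt.mpr hs)
  exact (hu _ t ⟨by linarith [neg_abs_le t], by linarith [le_abs_self t]⟩).congr_of_eventuallyEq hev

end LipschitzWith

theorem Continuous.forall_lt_of_bootstrap {f : ℝ → ℝ} {d : ℝ} (hf : Continuous f) (h₀ : d ≤ f 0)
    (h : ∀ T, 0 ≤ T → (∀ s ∈ Icc 0 T, d ≤ f s) → d < f T) (t : ℝ) (ht : 0 ≤ t) : d < f t := by
  refine h t ht ((isClosed_le continuous_const hf).inter isClosed_Icc
    |>.Icc_subset_of_forall_mem_nhdsGT_of_Icc_subset h₀ fun T hT hle => ?_)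
  have hopen : {s | d < f s} ∈ 𝓝 T := (isOpen_lt continuous_const hf).mem_nhds (h T hT.1 hle)
  exact mem_nhdsWithin_of_mem_nhds (mem_of_superset hopen fun s (hs : d < f s) => hs.le)

noncomputable section

namespace GaussianWidth

variable (α₀ lam : ℝ)

def force (x : ℝ) : ℝ := α₀ ^ 2 / x ^ 3 + 2 * lam * α₀ / x

def potential (x : ℝ) : ℝ := α₀ ^ 2 / x ^ 2 - 4 * lam * α₀ * Real.log x

variable {α₀ lam}

theorem hasDerivAt_force {x : ℝ} (hx : x ≠ 0) :
    HasDerivAt (force α₀ lam) (-(3 * α₀ ^ 2 / x ^ 4 + 2 * lam * α₀ / x ^ 2)) x := by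
  have h := ((hasDerivAt_const x (α₀ ^ 2)).div (hasDerivAt_pow 3 x) (pow_ne_zero 3 hx)).add
    ((hasDerivAt_const x (2 * lam * α₀)).div (hasDerivAt_id' x) hx)
  exact h.congr_deriv (by field_simp; ring)

theorem hasDerivAt_potential {x : ℝ} (hx : 0 < x) :
    HasDerivAt (potential α₀ lam) (-2 * force α₀ lam x) x := by
  have h := ((hasDerivAt_const x (α₀ ^ 2)).div (hasDerivAt_pow 2 x) (pow_ne_zero 2 hx.ne')).sub
    ((Real.hasDerivAt_log hx.ne').const_mul (4 * lam * α₀))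
  exact h.congr_deriv (by simp only [force]; field_simp; ring)

theorem lipschitzOnWith_force {q : ℝ} (hq : 0 < q) :
    ∃ K, LipschitzOnWith K (force α₀ lam) (Ici q) := by
  refine ⟨_, LipschitzOnWith.of_dist_le' (K := 3 * α₀ ^ 2 / q ^ 4 + |2 * lam * α₀| / q ^ 2)
    fun x hx y hy => ?_⟩
  rw [dist_eq_norm, dist_eq_norm]
  refine (convex_Ici q).norm_image_sub_le_of_norm_hasDerivWithin_le
    (fun z hz => (hasDerivAt_force (hq.trans_le hz).ne').hasDerivWithinAt)
    (fun z (hqz : q ≤ z) => ?_) hy hx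
  have hz : 0 < z := hq.trans_le hqz
  calc ‖-(3 * α₀ ^ 2 / z ^ 4 + 2 * lam * α₀ / z ^ 2)‖
      ≤ |3 * α₀ ^ 2 / z ^ 4| + |2 * lam * α₀ / z ^ 2| := by
        rw [norm_neg, Real.norm_eq_abs]; exact abs_add_le _ _
    _ = 3 * α₀ ^ 2 / z ^ 4 + |2 * lam * α₀| / z ^ 2 := by
        rw [abs_of_nonneg (by positivity), abs_div, abs_of_pos (by positivity : (0 : ℝ) < z ^ 2)]
    _ ≤ 3 * α₀ ^ 2 / q ^ 4 + |2 * lam * α₀| / q ^ 2 := by gcongr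

theorem tendsto_potential_nhdsGT_zero (hα₀ : α₀ ≠ 0) :
    Tendsto (potential α₀ lam) (𝓝[>] 0) atTop := by
  -- `x ^ 2 * potential x → α₀ ^ 2` because `x ^ 2 log x → 0`
  have hlog : Tendsto (fun x => α₀ ^ 2 - 4 * lam * α₀ * (Real.log x * x ^ (2 : ℝ))) (𝓝[>] 0)
      (𝓝 (α₀ ^ 2)) := by
    simpa using (tendsto_log_mul_rpow_nhdsGT_zero two_pos).const_mul (4 * lam * α₀)
      |>.const_sub (α₀ ^ 2)
  refine ((tendsto_pow_atTop two_ne_zero).comp tendsto_inv_nhdsGT_zero).atTop_mul_pos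
    (by positivity) hlog |>.congr' ?_
  filter_upwards [self_mem_nhdsWithin] with x hx
  simp only [Function.comp, potential, Real.rpow_two]
  field_simp [(mem_Ioi.mp hx).ne']

theorem exists_forall_mem_Ioc_lt_potential (hα₀ : α₀ ≠ 0) (E : ℝ) :
    ∃ d > 0, ∀ x ∈ Ioc 0 d, E < potential α₀ lam x := by
  obtain ⟨d, hd, hsub⟩ := mem_nhdsGT_iff_exists_Ioc_subset.mp
    ((tendsto_potential_nhdsGT_zero (lam := lam) hα₀).eventually_gt_atTop E)
  exact ⟨d, hd, hsub⟩

variable (α₀ lam) in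
-- `r'' = force r` as a system in `(r, r')`, with the force frozen below `q` to make it Lipschitz
def truncatedField (q : ℝ) (p : ℝ × ℝ) : ℝ × ℝ := (p.2, force α₀ lam (max p.1 q))

theorem lipschitzWith_truncatedField {q : ℝ} (hq : 0 < q) :
    ∃ K, LipschitzWith K (truncatedField α₀ lam q) := by
  obtain ⟨K, hK⟩ := lipschitzOnWith_force (α₀ := α₀) (lam := lam) hq
  have hG : LipschitzWith (K * 1) (force α₀ lam ∘ fun x => max x q) :=
    lipschitzOnWith_univ.mp <| hK.comp (LipschitzWith.id.max_const q).lipschitzOnWith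
      fun x _ => le_max_right x q
  exact ⟨_, LipschitzWith.prod_snd.prodMk (hG.comp LipschitzWith.prod_fst)⟩

section TruncatedSolution

variable {q : ℝ} {r v : ℝ → ℝ} (hr : ∀ t, HasDerivAt r (v t) t)
  (hv : ∀ t, HasDerivAt v (force α₀ lam (max (r t) q)) t)
include hr hv

theorem energy_eq_of_forall_mem_Icc_le (hq : 0 < q) {T : ℝ} (hT : 0 ≤ T)
    (hrq : ∀ s ∈ Icc 0 T, q ≤ r s) :
    v T ^ 2 + potential α₀ lam (r T) = v 0 ^ 2 + potential α₀ lam (r 0) := by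
  have hderiv : ∀ s ∈ Icc 0 T,
      HasDerivAt (fun s => v s ^ 2 + potential α₀ lam (r s)) 0 s := by
    intro s hs
    have hrs : 0 < r s := hq.trans_le (hrq s hs)
    have h := ((hv s).pow 2).add ((hasDerivAt_potential (α₀ := α₀) (lam := lam) hrs).comp s (hr s))
    rw [max_eq_left (hrq s hs)] at h
    exact h.congr_deriv (by push_cast; ring)
  exact constant_of_has_deriv_right_zero
    (fun s hs => (hderiv s hs).continuousAt.continuousWithinAt)
    (fun s hs => (hderiv s (Ico_subset_Icc_self hs)).hasDerivWithinAt) T ⟨hT, le_rfl⟩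

theorem lt_of_forall_mem_Ioc_energy_lt_potential (hq : 0 < q) {d : ℝ} (hqd : q < d)
    (hr₀ : 0 < r 0)
    (hd : ∀ x ∈ Ioc 0 d, v 0 ^ 2 + potential α₀ lam (r 0) < potential α₀ lam x)
    (t : ℝ) (ht : 0 ≤ t) : d < r t := by
  have hout : ∀ s, 0 < r s →
      v s ^ 2 + potential α₀ lam (r s) = v 0 ^ 2 + potential α₀ lam (r 0) → d < r s := by
    intro s hs hE
    by_contra! hsd
    linarith [hd (r s) ⟨hs, hsd⟩, sq_nonneg (v s)]
  refine (continuous_iff_continuousAt.mpr fun s => (hr s).continuousAt).forall_lt_of_bootstrap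
    (hout 0 hr₀ rfl).le (fun T hT hle => ?_) t ht
  exact hout T (by linarith [hle T ⟨hT, le_rfl⟩]) (energy_eq_of_forall_mem_Icc_le hr hv hq hT
    fun s hs => hqd.le.trans (hle s hs))

end TruncatedSolution

end GaussianWidth

end

/-- The Gaussian-width ODE `r'' = α₀²/r³ + 2λα₀/r`, `r(0)=1`, `r'(0)=−β₀` has a global
solution in positive time, bounded below by some `δ > 0`, satisfying the first integral
`(r')² = β₀² + α₀² − α₀²/r² + 4λα₀ ln r`. -/
theorem gaussian_width_ode (α₀ β₀ lam : ℝ) (hα₀ : 0 < α₀) :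
    ∃ r : ℝ → ℝ, r 0 = 1 ∧ deriv r 0 = -β₀ ∧
      (∃ δ : ℝ, 0 < δ ∧ ∀ t : ℝ, 0 ≤ t → δ ≤ r t) ∧
      (∀ t : ℝ, 0 ≤ t →
        deriv (deriv r) t = α₀ ^ 2 / r t ^ 3 + 2 * lam * α₀ / r t) ∧
      ∀ t : ℝ, 0 ≤ t →
        (deriv r t) ^ 2 = β₀ ^ 2 + α₀ ^ 2 - α₀ ^ 2 / r t ^ 2 + 4 * lam * α₀ * Real.log (r t) := by
  obtain ⟨d, hd, hbarrier⟩ :=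
    GaussianWidth.exists_forall_mem_Ioc_lt_potential (lam := lam) hα₀.ne' (β₀ ^ 2 + α₀ ^ 2)
  obtain ⟨K, hK⟩ := GaussianWidth.lipschitzWith_truncatedField (α₀ := α₀) (lam := lam) (half_pos hd)
  obtain ⟨u, hu₀, hu⟩ := hK.exists_eq_forall_hasDerivAt (1, -β₀)
  set r := fun t => (u t).1
  set v := fun t => (u t).2
  have hr : ∀ t, HasDerivAt r (v t) t := fun t =>
    (hasFDerivAt_fst.comp_hasDerivAt t (hu t) :)
  have hv : ∀ t, HasDerivAt v (GaussianWidth.force α₀ lam (max (r t) (d / 2))) t :=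
    fun t => (hasFDerivAt_snd.comp_hasDerivAt t (hu t) :)
  have hE₀ : v 0 ^ 2 + GaussianWidth.potential α₀ lam (r 0) = β₀ ^ 2 + α₀ ^ 2 := by
    simp [r, v, hu₀, GaussianWidth.potential]
  have hlow := GaussianWidth.lt_of_forall_mem_Ioc_energy_lt_potential hr hv (half_pos hd)
    (half_lt_self hd) (by simp [r, hu₀]) (hE₀ ▸ hbarrier)
  have hderiv : deriv r = v := funext fun t => (hr t).deriv
  refine ⟨r, by simp [r, hu₀], by simp [hderiv, v, hu₀], ⟨d, hd, fun t ht => (hlow t ht).le⟩,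
    fun t ht => ?_, fun t ht => ?_⟩
  · rw [hderiv, (hv t).deriv, max_eq_left (by linarith [hlow t ht])]
    rfl
  · have hE := GaussianWidth.energy_eq_of_forall_mem_Icc_le hr hv (half_pos hd) ht
      fun s hs => by linarith [hlow s hs.1]
    rw [hE₀, GaussianWidth.potential] at hE
    rw [hderiv]
    linarith
end

section
/- Let λ < 0, α₀ > 0, β₀ ∈ ℝ, and define U(r) = −β₀²/2 − (α₀²/2)(1 − 1/r²) + 2|λ|α₀ ln r for r > 0. Then U is strictly decreasing on (0, √(α₀/(2|λ|))], strictly increasing on [√(α₀/(2|λ|)), ∞), tends to +∞ as r → 0⁺ and as r → ∞, and its minimum value is U_min = −β₀²/2 + (α₀²/2)(x − 1 − x ln x) evaluated at x = 2|λ|/α₀; moreover U_min ≤ 0, with U_min = 0 if and only if β₀ = 0 and α₀ = 2|λ|. -/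
/-!
Up to an additive constant, `U r = A / r ^ 2 + B * log r` with `A = α₀ ^ 2 / 2` and
`B = 2 |λ| α₀`. Its derivative `(B r ^ 2 - 2 A) / r ^ 3` changes sign exactly once, at
`r₀ ^ 2 = 2 A / B = α₀ / (2 |λ|)`, so `r₀` is the global minimiser; writing the minimum in terms of
`x = 2 |λ| / α₀` shows it is `-β₀ ^ 2 / 2` plus `α₀ ^ 2 / 2` times `x - 1 - x log x ≤ 0`.
-/

open Filter Real Set Topology

noncomputable def invSqAddLog (A B r : ℝ) : ℝ := A / r ^ 2 + B * log r

section invSqAddLog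

variable {A B : ℝ}

theorem hasDerivAt_invSqAddLog {r : ℝ} (hr : r ≠ 0) :
    HasDerivAt (invSqAddLog A B) ((B * r ^ 2 - 2 * A) / r ^ 3) r := by
  have h := (((hasDerivAt_pow 2 r).inv (pow_ne_zero 2 hr)).const_mul A).add
    ((hasDerivAt_log hr).const_mul B)
  refine h.congr_deriv ?_
  field_simp
  ring

theorem strictAntiOn_invSqAddLog (hB : 0 < B) :
    StrictAntiOn (invSqAddLog A B) (Ioc 0 √(2 * A / B)) := by
  refine strictAntiOn_of_deriv_neg (convex_Ioc _ _) ?_ ?_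
  · exact fun r hr ↦ (hasDerivAt_invSqAddLog hr.1.ne').continuousAt.continuousWithinAt
  · intro r hr
    rw [interior_Ioc] at hr
    have hr2 : r ^ 2 < 2 * A / B := (lt_sqrt hr.1.le).1 hr.2
    rw [(hasDerivAt_invSqAddLog hr.1.ne').deriv]
    refine div_neg_of_neg_of_pos ?_ (pow_pos hr.1 3)
    rw [lt_div_iff₀ hB] at hr2
    linarith

theorem strictMonoOn_invSqAddLog (hA : 0 < A) (hB : 0 < B) :
    StrictMonoOn (invSqAddLog A B) (Ici √(2 * A / B)) := by
  have hr₀ : 0 < √(2 * A / B) := sqrt_pos.2 (by positivity)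
  refine strictMonoOn_of_deriv_pos (convex_Ici _) ?_ ?_
  · exact fun r hr ↦
      (hasDerivAt_invSqAddLog (hr₀.trans_le hr).ne').continuousAt.continuousWithinAt
  · intro r hr
    rw [interior_Ici] at hr
    have hr_pos : 0 < r := hr₀.trans hr
    have hr2 : 2 * A / B < r ^ 2 := (sqrt_lt' hr_pos).1 hr
    rw [(hasDerivAt_invSqAddLog hr_pos.ne').deriv]
    refine div_pos ?_ (pow_pos hr_pos 3)
    rw [div_lt_iff₀ hB] at hr2
    linarith

theorem invSqAddLog_sqrt (hA : 0 < A) (hB : 0 < B) :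
    invSqAddLog A B √(2 * A / B) = B / 2 * (1 + log (2 * A / B)) := by
  have h : 0 ≤ 2 * A / B := by positivity
  rw [invSqAddLog, sq_sqrt h, log_sqrt h]
  field_simp

theorem tendsto_invSqAddLog_nhdsGT_zero (hA : 0 < A) (hB : 0 ≤ B) :
    Tendsto (invSqAddLog A B) (𝓝[>] 0) atTop := by
  -- in terms of `s = r⁻¹`, the bound `log r ≥ 1 - s` leaves a quadratic in `s`
  have hquad : Tendsto (fun s : ℝ ↦ B + s * (A * s - B)) atTop atTop :=
    tendsto_atTop_add_const_left _ _ <| tendsto_id.atTop_mul_atTop₀ <|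
      tendsto_atTop_add_const_right _ _ (tendsto_id.const_mul_atTop hA)
  refine tendsto_atTop_mono' _ ?_ (hquad.comp tendsto_inv_nhdsGT_zero)
  filter_upwards [self_mem_nhdsWithin] with r (hr : 0 < r)
  have hlog := mul_le_mul_of_nonneg_left (one_sub_inv_le_log_of_pos hr) hB
  simp only [Function.comp_apply, invSqAddLog, div_eq_mul_inv, ← inv_pow]
  linarith

theorem tendsto_invSqAddLog_atTop (hA : 0 ≤ A) (hB : 0 < B) :
    Tendsto (invSqAddLog A B) atTop atTop := by
  refine tendsto_atTop_mono' _ ?_ (tendsto_log_atTop.const_mul_atTop hB)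
  filter_upwards with r
  exact le_add_of_nonneg_left (by positivity)

end invSqAddLog

theorem isMinOn_Ioi_of_antitoneOn_of_monotoneOn {α β : Type*} [LinearOrder α] [Preorder β]
    {f : α → β} {a c : α} (hac : a < c) (hanti : AntitoneOn f (Ioc a c))
    (hmono : MonotoneOn f (Ici c)) : IsMinOn f (Ioi a) c := by
  intro x hx
  rcases le_total x c with hxc | hcx
  · exact hanti ⟨hx, hxc⟩ ⟨hac, le_rfl⟩ hxc
  · exact hmono (mem_Ici.2 le_rfl) hcx hcx

theorem sub_one_sub_mul_log_nonpos {x : ℝ} (hx : 0 ≤ x) : x - 1 - x * log x ≤ 0 :=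
  sub_nonpos.2 (self_sub_one_le_mul_log hx)

theorem sub_one_sub_mul_log_eq_zero_iff {x : ℝ} (hx : 0 ≤ x) :
    x - 1 - x * log x = 0 ↔ x = 1 := by
  refine ⟨fun h ↦ ?_, fun h ↦ by simp [h]⟩
  by_contra hx1
  linarith [self_sub_one_lt_mul_log hx hx1]

theorem add_eq_zero_iff_of_nonpos {α : Type*} [AddCommGroup α] [PartialOrder α]
    [IsOrderedAddMonoid α] {a b : α} (ha : a ≤ 0) (hb : b ≤ 0) :
    a + b = 0 ↔ a = 0 ∧ b = 0 := by
  rw [← neg_eq_zero, neg_add, add_eq_zero_iff_of_nonneg (neg_nonneg.2 ha) (neg_nonneg.2 hb),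
    neg_eq_zero, neg_eq_zero]

/-- Properties of the effective potential
`U(r) = −β₀²/2 − (α₀²/2)(1 − 1/r²) + 2|λ|α₀ ln r` for `λ < 0`, `α₀ > 0`:
monotonicity, behavior at `0⁺` and `∞`, and the value and sign of its minimum. -/
theorem effective_potential_properties (lam α₀ β₀ : ℝ) (hlam : lam < 0) (hα₀ : 0 < α₀) :
    let U : ℝ → ℝ := fun r =>
      -β₀ ^ 2 / 2 - α₀ ^ 2 / 2 * (1 - 1 / r ^ 2) + 2 * |lam| * α₀ * Real.log r
    let r₀ : ℝ := Real.sqrt (α₀ / (2 * |lam|))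
    let Umin : ℝ :=
      -β₀ ^ 2 / 2 + α₀ ^ 2 / 2 *
        (2 * |lam| / α₀ - 1 - 2 * |lam| / α₀ * Real.log (2 * |lam| / α₀))
    StrictAntiOn U (Set.Ioc (0 : ℝ) r₀) ∧
      StrictMonoOn U (Set.Ici r₀) ∧
      Tendsto U (nhdsWithin 0 (Set.Ioi (0 : ℝ))) atTop ∧
      Tendsto U atTop atTop ∧
      U r₀ = Umin ∧
      (∀ r : ℝ, 0 < r → Umin ≤ U r) ∧
      Umin ≤ 0 ∧
      (Umin = 0 ↔ β₀ = 0 ∧ α₀ = 2 * |lam|) := by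
  intro U r₀ Umin
  have hlam' : 0 < |lam| := abs_pos.2 hlam.ne
  have hA : 0 < α₀ ^ 2 / 2 := by positivity
  have hB : 0 < 2 * |lam| * α₀ := by positivity
  have hU :
      U = fun r ↦ (-β₀ ^ 2 / 2 - α₀ ^ 2 / 2) + invSqAddLog (α₀ ^ 2 / 2) (2 * |lam| * α₀) r := by
    funext r
    simp only [U, invSqAddLog]
    ring
  have hratio : 2 * (α₀ ^ 2 / 2) / (2 * |lam| * α₀) = α₀ / (2 * |lam|) := by field_simp
  have hr₀ : r₀ = √(2 * (α₀ ^ 2 / 2) / (2 * |lam| * α₀)) := by rw [hratio]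
  have hUr₀ : U r₀ = Umin := by
    rw [hU, hr₀]
    dsimp only
    rw [invSqAddLog_sqrt hA hB, hratio]
    simp only [Umin, ← inv_div α₀ (2 * |lam|), log_inv]
    field_simp
    ring
  have hanti : StrictAntiOn U (Ioc 0 r₀) := by
    rw [hU, hr₀]; exact (strictAntiOn_invSqAddLog hB).const_add _
  have hmono : StrictMonoOn U (Ici r₀) := by
    rw [hU, hr₀]; exact (strictMonoOn_invSqAddLog hA hB).const_add _
  have hx : 0 ≤ 2 * |lam| / α₀ := by positivity
  have hβ : -β₀ ^ 2 / 2 ≤ 0 := by linarith [sq_nonneg β₀]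
  have hg : α₀ ^ 2 / 2 * (2 * |lam| / α₀ - 1 - 2 * |lam| / α₀ * log (2 * |lam| / α₀)) ≤ 0 :=
    mul_nonpos_of_nonneg_of_nonpos hA.le (sub_one_sub_mul_log_nonpos hx)
  refine ⟨hanti, hmono, ?_, ?_, hUr₀, fun r hr ↦ hUr₀ ▸ isMinOn_Ioi_of_antitoneOn_of_monotoneOn
    (sqrt_pos.2 (by positivity)) hanti.antitoneOn hmono.monotoneOn hr, add_nonpos hβ hg, ?_⟩
  · rw [hU]
    exact tendsto_atTop_add_const_left _ _ (tendsto_invSqAddLog_nhdsGT_zero hA hB.le)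
  · rw [hU]
    exact tendsto_atTop_add_const_left _ _ (tendsto_invSqAddLog_atTop hA.le hB)
  · rw [add_eq_zero_iff_of_nonpos hβ hg, mul_eq_zero, sub_one_sub_mul_log_eq_zero_iff hx,
      div_eq_one_iff_eq hα₀.ne', eq_comm (a := 2 * |lam|)]
    simp [hA.ne']
end

section
/- Let λ > 0 and let r_eff : [T, ∞) → (0,∞) be an increasing solution with r_eff(t) → ∞ of r_eff'(t) = √(C₀ + 4λα₀ ln r_eff(t)) for constants C₀ ∈ ℝ, α₀ > 0 (valid for t large enough that the radicand is positive). Then r_eff(t)/(2t√(λα₀ ln t)) → 1 as t → ∞. -/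
open Filter Real Set Topology

/-! Since `r' → ∞`, eventually `r t ≥ t`, and since `r' ≤ √r` eventually, `r t ≤ t ^ 2`.
Hence `r' = O(√(log t))`, so `r t = O(t √(log t))` and `log (r t) ∼ log t`. Therefore
`r' ∼ √(k log t)` with `k = 4λα₀`, and because `√log` is slowly varying
(`log (t / log t) ∼ log t`), integrating gives `r t ∼ t √(k log t)`. -/

section MeanValue

variable {f f' g : ℝ → ℝ} {a b : ℝ}

theorem sub_le_mul_sub_of_hasDerivAt_le_monotoneOn (hab : a ≤ b)
    (hf : ∀ s ∈ Icc a b, HasDerivAt f (f' s) s) (hg : MonotoneOn g (Icc a b))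
    (hle : ∀ s ∈ Icc a b, f' s ≤ g s) : f b - f a ≤ g b * (b - a) := by
  refine (convex_Icc a b).image_sub_le_mul_sub_of_deriv_le
    (fun s hs => (hf s hs).continuousAt.continuousWithinAt)
    (fun s hs => (hf s (interior_subset hs)).differentiableAt.differentiableWithinAt)
    (fun s hs => ?_) a (left_mem_Icc.2 hab) b (right_mem_Icc.2 hab) hab
  have hs' := interior_subset hs
  rw [(hf s hs').deriv]
  exact (hle s hs').trans (hg hs' (right_mem_Icc.2 hab) hs'.2)

theorem mul_sub_le_sub_of_monotoneOn_le_hasDerivAt (hab : a ≤ b)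
    (hf : ∀ s ∈ Icc a b, HasDerivAt f (f' s) s) (hg : MonotoneOn g (Icc a b))
    (hle : ∀ s ∈ Icc a b, g s ≤ f' s) : g a * (b - a) ≤ f b - f a := by
  refine (convex_Icc a b).mul_sub_le_image_sub_of_le_deriv
    (fun s hs => (hf s hs).continuousAt.continuousWithinAt)
    (fun s hs => (hf s (interior_subset hs)).differentiableAt.differentiableWithinAt)
    (fun s hs => ?_) a (left_mem_Icc.2 hab) b (right_mem_Icc.2 hab) hab
  have hs' := interior_subset hs
  rw [(hf s hs').deriv]
  exact (hg (left_mem_Icc.2 hab) hs' hs'.1).trans (hle s hs')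

end MeanValue

theorem tendsto_mul_sqrt_log_atTop : Tendsto (fun t => t * √(log t)) atTop atTop :=
  tendsto_id.atTop_mul_atTop₀ (tendsto_sqrt_atTop.comp tendsto_log_atTop)

theorem tendsto_log_log_div_log : Tendsto (fun t => log (log t) / log t) atTop (𝓝 0) :=
  (isLittleO_log_id_atTop.comp_tendsto tendsto_log_atTop).tendsto_div_nhds_zero

theorem tendsto_div_log_atTop : Tendsto (fun t => t / log t) atTop atTop := by
  have h : Tendsto (fun t => log t / t) atTop (𝓝[>] 0) :=
    tendsto_nhdsWithin_iff.2 ⟨isLittleO_log_id_atTop.tendsto_div_nhds_zero,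
      (eventually_gt_atTop 1).mono fun t ht => div_pos (log_pos ht) (by linarith)⟩
  exact h.inv_tendsto_nhdsGT_zero.congr fun t => inv_div (log t) t

theorem monotoneOn_mul_sqrt_log {c : ℝ} (hc : 0 ≤ c) :
    MonotoneOn (fun t => c * √(log t)) (Ici 1) :=
  fun _ hs _ _ hst => mul_le_mul_of_nonneg_left
    (sqrt_le_sqrt (log_le_log (zero_lt_one.trans_le hs) hst)) hc

section SqrtLogGrowth

variable {f f' : ℝ → ℝ} {T c : ℝ}

theorem eventually_div_mul_sqrt_log_lt (hf : ∀ t, T ≤ t → HasDerivAt f (f' t) t) (hc : 0 ≤ c)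
    (hle : ∀ᶠ t in atTop, f' t ≤ c * √(log t)) {b : ℝ} (hb : c < b) :
    ∀ᶠ t in atTop, f t / (t * √(log t)) < b := by
  obtain ⟨S, hS⟩ := eventually_atTop.1
    (hle.and ((eventually_ge_atTop T).and (eventually_ge_atTop 1)))
  obtain ⟨-, hTS, hS1⟩ := hS S le_rfl
  have hfS : Tendsto (fun t => f S / (t * √(log t))) atTop (𝓝 0) :=
    tendsto_const_nhds.div_atTop tendsto_mul_sqrt_log_atTop
  filter_upwards [hfS.eventually (gt_mem_nhds (sub_pos.2 hb)), eventually_ge_atTop S,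
    eventually_gt_atTop 1] with t hsmall hSt ht1
  have hpos : 0 < t * √(log t) := mul_pos (by linarith) (sqrt_pos.2 (log_pos ht1))
  have hmvt := sub_le_mul_sub_of_hasDerivAt_le_monotoneOn hSt
    (fun s hs => hf s (hTS.trans hs.1))
    ((monotoneOn_mul_sqrt_log hc).mono fun s hs => hS1.trans hs.1) (fun s hs => (hS s hs.1).1)
  have hdrop : c * √(log t) * (t - S) ≤ c * √(log t) * t :=
    mul_le_mul_of_nonneg_left (by linarith) (mul_nonneg hc (sqrt_nonneg _))
  rw [div_lt_iff₀ hpos] at hsmall ⊢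
  linarith

theorem eventually_lt_div_mul_sqrt_log (hf : ∀ t, T ≤ t → HasDerivAt f (f' t) t) (hc : 0 ≤ c)
    (hge : ∀ᶠ t in atTop, c * √(log t) ≤ f' t) {a : ℝ} (ha : a < c) :
    ∀ᶠ t in atTop, a < f t / (t * √(log t)) := by
  obtain ⟨S, hS⟩ := eventually_atTop.1
    (hge.and ((eventually_ge_atTop T).and (eventually_ge_atTop 1)))
  obtain ⟨-, hTS, hS1⟩ := hS S le_rfl
  -- integrate `f'` over `[S, t / log t]` crudely and over `[t / log t, t]` sharply
  set ψ : ℝ → ℝ := fun t =>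
    f S / (t * √(log t)) + c * ((1 - (log t)⁻¹) * √(1 - log (log t) / log t))
  have hψ : Tendsto ψ atTop (𝓝 c) := by
    have : Tendsto ψ atTop (𝓝 (0 + c * ((1 - 0) * √(1 - 0)))) :=
      (tendsto_const_nhds.div_atTop tendsto_mul_sqrt_log_atTop).add
      (tendsto_const_nhds.mul ((tendsto_const_nhds.sub tendsto_log_atTop.inv_tendsto_atTop).mul
        (tendsto_const_nhds.sub tendsto_log_log_div_log).sqrt))
    simpa using this
  filter_upwards [hψ.eventually (lt_mem_nhds ha), tendsto_div_log_atTop.eventually_ge_atTop S,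
    eventually_ge_atTop (exp 1)] with t hψt hSu ht
  refine hψt.trans_le ?_
  have hlog : 1 ≤ log t := by rwa [le_log_iff_exp_le (by linarith [exp_pos 1])]
  have ht0 : 0 < t := (exp_pos 1).trans_le ht
  set u := t / log t
  have hut : u ≤ t := div_le_self ht0.le hlog
  have hfSu : 0 * (u - S) ≤ f u - f S :=
    mul_sub_le_sub_of_monotoneOn_le_hasDerivAt hSu (fun s hs => hf s (hTS.trans hs.1))
      monotoneOn_const fun s hs => (mul_nonneg hc (sqrt_nonneg _)).trans (hS s hs.1).1
  have hfut : c * √(log u) * (t - u) ≤ f t - f u :=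
    mul_sub_le_sub_of_monotoneOn_le_hasDerivAt hut (fun s hs => hf s (hTS.trans (hSu.trans hs.1)))
      ((monotoneOn_mul_sqrt_log hc).mono fun s hs => hS1.trans (hSu.trans hs.1))
      fun s hs => (hS s (hSu.trans hs.1)).1
  have hlogu : log u = log t * (1 - log (log t) / log t) := by
    rw [log_div ht0.ne' (by linarith)]
    field_simp
  have hpos : 0 < t * √(log t) := mul_pos ht0 (sqrt_pos.2 (by linarith))
  have hsplit : c * √(log u) * (t - u) =
      c * ((1 - (log t)⁻¹) * √(1 - log (log t) / log t)) * (t * √(log t)) := by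
    have htu : t - u = t * (1 - (log t)⁻¹) := by
      rw [mul_sub, mul_one, ← div_eq_mul_inv]
    rw [hlogu, sqrt_mul (by linarith), htu]
    field_simp
  rw [le_div_iff₀ hpos]
  simp only [ψ, add_mul, div_mul_cancel₀ _ hpos.ne']
  linarith

theorem tendsto_div_mul_sqrt_log (hf : ∀ t, T ≤ t → HasDerivAt f (f' t) t) (hc : 0 < c)
    (hlim : Tendsto (fun t => f' t / √(log t)) atTop (𝓝 c)) :
    Tendsto (fun t => f t / (t * √(log t))) atTop (𝓝 c) := by
  have hsqrt_pos : ∀ᶠ t in atTop, 0 < √(log t) :=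
    (tendsto_log_atTop.eventually_gt_atTop 0).mono fun t ht => sqrt_pos.2 ht
  refine tendsto_order.2 ⟨fun a ha => ?_, fun b hb => ?_⟩
  · obtain ⟨c', hac', hc'c⟩ := exists_between (max_lt ha hc)
    refine eventually_lt_div_mul_sqrt_log hf ((le_max_right a 0).trans hac'.le) ?_
      ((le_max_left a 0).trans_lt hac')
    filter_upwards [(tendsto_order.1 hlim).1 c' hc'c, hsqrt_pos] with t ht hpos
    exact ((lt_div_iff₀ hpos).1 ht).le
  · obtain ⟨c', hcc', hc'b⟩ := exists_between hb
    refine eventually_div_mul_sqrt_log_lt hf (hc.trans hcc').le ?_ hc'b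
    filter_upwards [(tendsto_order.1 hlim).2 c' hcc', hsqrt_pos] with t ht hpos
    exact ((div_lt_iff₀ hpos).1 ht).le

end SqrtLogGrowth

theorem eventually_add_mul_log_le_self (C k : ℝ) : ∀ᶠ x in atTop, C + k * log x ≤ x := by
  have h : Tendsto (fun x => C / x + k * (log x / x)) atTop (𝓝 (0 + k * 0)) :=
    (tendsto_const_nhds.div_atTop tendsto_id).add
      (isLittleO_log_id_atTop.tendsto_div_nhds_zero.const_mul k)
  filter_upwards [h.eventually (gt_mem_nhds (show 0 + k * 0 < (1 : ℝ) by simp)),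
    eventually_gt_atTop 0] with x hx hx0
  rw [← mul_div_assoc, ← add_div, div_lt_one hx0] at hx
  exact hx.le

section LogODE

variable {r : ℝ → ℝ} {T C k : ℝ}

theorem eventually_self_le_of_hasDerivAt_sqrt_log (hk : 0 < k) (hr : Tendsto r atTop atTop)
    (hode : ∀ t, T ≤ t → HasDerivAt r (√(C + k * log (r t))) t) :
    ∀ᶠ t in atTop, t ≤ r t := by
  have hrad : Tendsto (fun t => C + k * log (r t)) atTop atTop :=
    tendsto_atTop_add_const_left _ C ((tendsto_log_atTop.comp hr).const_mul_atTop hk)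
  obtain ⟨S, hS⟩ := eventually_atTop.1 (((tendsto_sqrt_atTop.comp hrad).eventually_ge_atTop 2).and
    ((eventually_ge_atTop T).and ((hr.eventually_ge_atTop 0).and (eventually_ge_atTop 0))))
  obtain ⟨-, -, hrS, hS0⟩ := hS S le_rfl
  filter_upwards [eventually_ge_atTop (2 * S)] with t ht
  have hmvt := mul_sub_le_sub_of_monotoneOn_le_hasDerivAt (g := fun _ => 2) (by linarith)
    (fun s hs => hode s (hS s hs.1).2.1) monotoneOn_const fun s hs => (hS s hs.1).1
  linarith

theorem eventually_le_sq_of_hasDerivAt_sqrt_log (hr : Tendsto r atTop atTop)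
    (hode : ∀ t, T ≤ t → HasDerivAt r (√(C + k * log (r t))) t) :
    ∀ᶠ t in atTop, r t ≤ t ^ 2 := by
  obtain ⟨S, hS⟩ := eventually_atTop.1 ((hr.eventually (eventually_add_mul_log_le_self C k)).and
    ((eventually_ge_atTop T).and ((hr.eventually_gt_atTop 0).and (eventually_ge_atTop 0))))
  obtain ⟨-, -, -, hS0⟩ := hS S le_rfl
  filter_upwards [eventually_ge_atTop (max S (2 * √(r S)))] with t ht
  obtain ⟨hSt, hrSt⟩ := max_le_iff.1 ht
  -- `√r` grows at most like `t / 2`, because `r' ≤ √r`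
  have hmvt := sub_le_mul_sub_of_hasDerivAt_le_monotoneOn (f := fun t => √(r t))
    (g := fun _ => 1 / 2) hSt
    (fun s hs => (hode s (hS s hs.1).2.1).sqrt (hS s hs.1).2.2.1.ne') monotoneOn_const
    fun s hs => by
      obtain ⟨hsub, -, hrs, -⟩ := hS s hs.1
      rw [div_le_iff₀ (by positivity)]
      linarith [sqrt_le_sqrt hsub]
  rw [← sqrt_le_left (by linarith)]
  linarith

theorem tendsto_log_div_log_of_hasDerivAt_sqrt_log (hk : 0 < k) (hr : Tendsto r atTop atTop)
    (hode : ∀ t, T ≤ t → HasDerivAt r (√(C + k * log (r t))) t) :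
    Tendsto (fun t => log (r t) / log t) atTop (𝓝 1) := by
  have hderiv : ∀ᶠ t in atTop, √(C + k * log (r t)) ≤ √(2 * k + 1) * √(log t) := by
    filter_upwards [eventually_le_sq_of_hasDerivAt_sqrt_log hr hode, hr.eventually_gt_atTop 0,
      tendsto_log_atTop.eventually_ge_atTop (max C 0)] with t hsq hpos hlog
    have hlog2 : log (r t) ≤ 2 * log t := by
      simpa using log_le_log hpos hsq
    rw [← sqrt_mul (by positivity)]
    refine sqrt_le_sqrt ?_
    linarith [mul_le_mul_of_nonneg_left hlog2 hk.le, le_max_left C 0]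
  set b := √(2 * k + 1) + 1
  have hupper : Tendsto (fun t => 1 + (log b / log t + log (log t) / log t)) atTop
      (𝓝 (1 + (0 + 0))) :=
    tendsto_const_nhds.add
      ((tendsto_const_nhds.div_atTop tendsto_log_atTop).add tendsto_log_log_div_log)
  rw [add_zero, add_zero] at hupper
  refine tendsto_of_tendsto_of_tendsto_of_le_of_le' tendsto_const_nhds hupper ?_ ?_
  · filter_upwards [eventually_self_le_of_hasDerivAt_sqrt_log hk hr hode,
      eventually_gt_atTop 1] with t ht ht1
    rw [le_div_iff₀ (log_pos ht1), one_mul]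
    exact log_le_log (by linarith) ht
  · filter_upwards [eventually_div_mul_sqrt_log_lt hode (by positivity) hderiv (lt_add_one _),
      eventually_ge_atTop (exp 1), hr.eventually_gt_atTop 0] with t hlt ht hpos
    have hlog : 1 ≤ log t := by rwa [le_log_iff_exp_le (by linarith [exp_pos 1])]
    have ht0 : 0 < t := (exp_pos 1).trans_le ht
    have hrt : r t ≤ b * t * log t := by
      change r t / (t * √(log t)) < b at hlt
      rw [div_lt_iff₀ (by positivity)] at hlt
      have := mul_le_mul_of_nonneg_left (sqrt_le_self_iff.2 (Or.inr hlog)) ht0.le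
      nlinarith [show 0 ≤ b by positivity]
    have hlogr := log_le_log hpos hrt
    rw [log_mul (by positivity) (by positivity), log_mul (by positivity) ht0.ne'] at hlogr
    rw [div_le_iff₀ (by linarith)]
    field_simp
    linarith

theorem tendsto_sqrt_div_sqrt_log (hk : 0 < k) (hr : Tendsto r atTop atTop)
    (hode : ∀ t, T ≤ t → HasDerivAt r (√(C + k * log (r t))) t) :
    Tendsto (fun t => √(C + k * log (r t)) / √(log t)) atTop (𝓝 √k) := by
  have h : Tendsto (fun t => C / log t + k * (log (r t) / log t)) atTop (𝓝 (0 + k * 1)) :=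
    (tendsto_const_nhds.div_atTop tendsto_log_atTop).add
      ((tendsto_log_div_log_of_hasDerivAt_sqrt_log hk hr hode).const_mul k)
  rw [zero_add, mul_one] at h
  refine h.sqrt.congr' ?_
  filter_upwards [tendsto_log_atTop.eventually_ge_atTop 0] with t ht
  rw [← mul_div_assoc, ← add_div, sqrt_div' _ ht]

end LogODE

theorem effective_dispersion_asymptotics_general (lam α₀ C₀ T : ℝ) (hlam : 0 < lam) (hα₀ : 0 < α₀)
    (r : ℝ → ℝ)
    (hinfty : Tendsto r atTop atTop)
    (hode : ∀ t : ℝ, T ≤ t →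
      HasDerivAt r (Real.sqrt (C₀ + 4 * lam * α₀ * Real.log (r t))) t) :
    Tendsto (fun t : ℝ => r t / (2 * t * Real.sqrt (lam * α₀ * Real.log t)))
      atTop (nhds 1) := by
  have hk : 0 < 4 * lam * α₀ := by positivity
  have hlim := (tendsto_div_mul_sqrt_log hode (sqrt_pos.2 hk)
    (tendsto_sqrt_div_sqrt_log hk hinfty hode)).div_const (2 * √(lam * α₀))
  have hsqrt : √(4 * lam * α₀) = 2 * √(lam * α₀) := by
    rw [mul_assoc, sqrt_mul zero_le_four, show (4 : ℝ) = 2 ^ 2 by norm_num, sqrt_sq zero_le_two]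
  rw [hsqrt, div_self (by positivity)] at hlim
  refine hlim.congr fun t => ?_
  rw [sqrt_mul (mul_pos hlam hα₀).le, div_div]
  ring_nf

/-- If `r_eff` is increasing on `[T,∞)`, tends to `∞`, and satisfies
`r' = √(C₀ + 4λα₀ ln r)` there (with positive radicand), then
`r_eff(t) ∼ 2t√(λα₀ ln t)` as `t → ∞`. -/
theorem effective_dispersion_asymptotics (lam α₀ C₀ T : ℝ) (hlam : 0 < lam) (hα₀ : 0 < α₀)
    (r : ℝ → ℝ)
    (hpos : ∀ t : ℝ, T ≤ t → 0 < r t)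
    (hmono : StrictMonoOn r (Set.Ici T))
    (hinfty : Tendsto r atTop atTop)
    (hrad : ∀ t : ℝ, T ≤ t → 0 < C₀ + 4 * lam * α₀ * Real.log (r t))
    (hode : ∀ t : ℝ, T ≤ t →
      HasDerivAt r (Real.sqrt (C₀ + 4 * lam * α₀ * Real.log (r t))) t) :
    Tendsto (fun t : ℝ => r t / (2 * t * Real.sqrt (lam * α₀ * Real.log t)))
      atTop (nhds 1) :=
  effective_dispersion_asymptotics_general lam α₀ C₀ T hlam hα₀ r hinfty hode
end
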